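/- arXiv:1301.6857 — 7 statements merged into one kernel-verified Lean document; each statement's English description precedes it below -/
import Mathlib

section
/- Let d, m be positive integers, let X_1, …, X_m be pairwise distinct points in ℝ^d, let p_1, …, p_m be nonnegative integers, and let I = I(X,p) be the associated Hermite ideal. Fix a monomial order on ℝ[x_1,…,x_d], let ⟨LT(I)⟩ be the ideal generated by the leading terms of the nonzero elements of I, and let S_I be the linear span of all monomials that do not lie in ⟨LT(I)⟩. Then the Hermite interpolation problem has a unique solution in S_I: for every family of real values c_{q,α} (1 ≤ q ≤ m, α ∈ ℕ^d with |α| ≤ p_q) there exists a unique polynomial f ∈ S_I such that ∂^α f(X_q) = c_{q,α} for all 1 ≤ q ≤ m and all |α| ≤ p_q. -/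
open MvPolynomial

/-- The iterated partial derivative `∂^α` as a linear endomorphism of `ℝ[x_1,…,x_d]`. -/
noncomputable def pderivPow {d : ℕ} (α : Fin d → ℕ) :
    Module.End ℝ (MvPolynomial (Fin d) ℝ) :=
  ((List.finRange d).map fun i => ((MvPolynomial.pderiv i).toLinearMap ^ α i)).prod

/-- The Hermite ideal `I(X,p)`, as a set: all polynomials whose partial derivatives of
order up to `p q` all vanish at `X q`, for every `q`. -/
def hermiteSet {d m : ℕ} (X : Fin m → (Fin d → ℝ)) (p : Fin m → ℕ) :
    Set (MvPolynomial (Fin d) ℝ) :=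
  {f | ∀ q, ∀ α : Fin d → ℕ, (∑ i, α i) ≤ p q → MvPolynomial.eval (X q) (pderivPow α f) = 0}

/-!
The jet of order `≤ k` of `f` at `a` consists, up to the factors `α!`, of the coefficients of
degree `≤ k` of the shifted polynomial `f(x + a)`. Hence the polynomials with vanishing jet form
the ideal `J_a`, the pullback of `(x_1, …, x_d)^(k+1)` under the shift, and `I = ⋂_q J_{X_q}`.
Since `J_a ⊇ 𝔪_a^(k+1)`, ideals attached to distinct points are coprime, so the Chinese remainder
theorem glues the local solutions (shifted Taylor polynomials) into one interpolant `F`.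
Dividing `F` by all nonzero elements of `I` leaves a remainder in `S_I` with the same jets; it is
unique because the leading monomial of a nonzero element of `I ∩ S_I` would lie in `⟨LT(I)⟩`.
-/

namespace MvPolynomial

section Taylor

variable {σ R : Type*} [CommRing R]

noncomputable def taylor (a : σ → R) : MvPolynomial σ R →ₐ[R] MvPolynomial σ R :=
  aeval fun i => X i + C (a i)

@[simp]
lemma taylor_X (a : σ → R) (i : σ) : taylor a (X i) = X i + C (a i) := aeval_X _ _

@[simp]
lemma taylor_C (a : σ → R) (r : R) : taylor a (C r) = C r := aeval_C _ _

lemma constantCoeff_taylor (a : σ → R) (f : MvPolynomial σ R) :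
    constantCoeff (taylor a f) = eval a f := by
  induction f using MvPolynomial.induction_on with
  | C r => simp
  | add f g hf hg => simp [hf, hg]
  | mul_X f i hf => simp [hf]

lemma taylor_taylor_neg (a : σ → R) (f : MvPolynomial σ R) : taylor a (taylor (-a) f) = f := by
  induction f using MvPolynomial.induction_on with
  | C r => simp
  | add f g hf hg => simp [hf, hg]
  | mul_X f i hf => simp [hf]

lemma pderiv_taylor (a : σ → R) (i : σ) (f : MvPolynomial σ R) :
    pderiv i (taylor a f) = taylor a (pderiv i f) := by
  induction f using MvPolynomial.induction_on with
  | C r => simp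
  | add f g hf hg => simp [hf, hg]
  | mul_X f j hf => classical simp [hf, pderiv_X, Pi.single_apply, apply_ite]

lemma ker_eval_le_comap_taylor_idealOfVars (a : σ → R) :
    RingHom.ker (eval a) ≤ (idealOfVars σ R).comap (taylor a) := by
  intro f hf
  rw [Ideal.mem_comap, ← pow_one (idealOfVars σ R), mem_pow_idealOfVars_iff']
  intro s hs
  rw [(Finsupp.degree_eq_zero_iff s).1 (by omega), ← constantCoeff_eq, constantCoeff_taylor]
  exact hf

end Taylor

section Coeff

variable {σ R : Type*} [CommRing R]

lemma coeff_pderiv_pow (i : σ) (n : ℕ) (f : MvPolynomial σ R) (s : σ →₀ ℕ) :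
    coeff s (((pderiv i).toLinearMap ^ n) f) =
      (s i + n).descFactorial n * coeff (s + Finsupp.single i n) f := by
  induction n generalizing f s with
  | zero => simp
  | succ n ih =>
    rw [pow_succ, Module.End.mul_apply, ih, Derivation.coeFn_coe, coeff_pderiv,
      ← add_assoc, Nat.succ_descFactorial_succ]
    simp only [Finsupp.add_apply, Finsupp.single_eq_same, add_assoc, Finsupp.single_add]
    push_cast
    ring

lemma coeff_list_prod_pderiv_pow {l : List σ} (hl : l.Nodup) (β : σ → ℕ)
    (f : MvPolynomial σ R) (s : σ →₀ ℕ) :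
    coeff s ((l.map fun i => (pderiv i).toLinearMap ^ β i).prod f) =
      (l.map fun i => ((s i + β i).descFactorial (β i) : R)).prod *
        coeff (s + (l.map fun i => Finsupp.single i (β i)).sum) f := by
  induction l generalizing s with
  | nil => simp
  | cons i l ih =>
    obtain ⟨hi, hl⟩ := List.nodup_cons.1 hl
    have hs : ∀ j ∈ l, (s + Finsupp.single i (β i)) j = s j := fun j hj => by
      simp [show i ≠ j by rintro rfl; exact hi hj]
    rw [List.map_cons, List.prod_cons, Module.End.mul_apply, coeff_pderiv_pow, ih hl,
      List.map_congr_left (fun j hj => by rw [hs j hj])]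
    simp only [List.map_cons, List.prod_cons, List.sum_cons, add_assoc]
    ring

end Coeff

section Jets

variable {d : ℕ}

lemma constantCoeff_pderivPow (β : Fin d → ℕ) (f : MvPolynomial (Fin d) ℝ) :
    constantCoeff (pderivPow β f) =
      (∏ i, ((β i).factorial : ℝ)) * coeff (Finsupp.equivFunOnFinite.symm β) f := by
  rw [constantCoeff_eq, pderivPow, coeff_list_prod_pderiv_pow (List.nodup_finRange d),
    Fin.prod_univ_def, Finsupp.equivFunOnFinite_symm_eq_sum, Fin.sum_univ_def]
  simp [Nat.descFactorial_self]

lemma pderivPow_taylor (a : Fin d → ℝ) (β : Fin d → ℕ) (f : MvPolynomial (Fin d) ℝ) :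
    pderivPow β (taylor a f) = taylor a (pderivPow β f) := by
  have h : Commute (pderivPow β) (taylor a).toLinearMap := by
    refine Commute.list_prod_left _ _ fun D hD => ?_
    obtain ⟨i, -, rfl⟩ := List.mem_map.1 hD
    exact Commute.pow_left (LinearMap.ext fun f => pderiv_taylor a i f) _
  exact LinearMap.congr_fun h f

theorem eval_pderivPow_eq_coeff_taylor (a : Fin d → ℝ) (β : Fin d → ℕ)
    (f : MvPolynomial (Fin d) ℝ) :
    eval a (pderivPow β f) =
      (∏ i, ((β i).factorial : ℝ)) * coeff (Finsupp.equivFunOnFinite.symm β) (taylor a f) := by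
  rw [← constantCoeff_taylor, ← pderivPow_taylor, constantCoeff_pderivPow]

lemma prod_factorial_ne_zero {ι : Type*} [Fintype ι] (β : ι → ℕ) :
    (∏ i, ((β i).factorial : ℝ)) ≠ 0 :=
  Finset.prod_ne_zero_iff.2 fun i _ => by positivity

noncomputable def jetIdeal (a : Fin d → ℝ) (k : ℕ) : Ideal (MvPolynomial (Fin d) ℝ) :=
  (idealOfVars (Fin d) ℝ ^ (k + 1)).comap (taylor a)

lemma mem_jetIdeal_iff {a : Fin d → ℝ} {k : ℕ} {f : MvPolynomial (Fin d) ℝ} :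
    f ∈ jetIdeal a k ↔ ∀ α : Fin d → ℕ, ∑ i, α i ≤ k → eval a (pderivPow α f) = 0 := by
  simp only [jetIdeal, Ideal.mem_comap, mem_pow_idealOfVars_iff', eval_pderivPow_eq_coeff_taylor,
    mul_eq_zero, prod_factorial_ne_zero, false_or, Nat.lt_succ_iff]
  exact Finsupp.equivFunOnFinite.forall_congr (by simp [Finsupp.degree_eq_sum])

lemma ker_eval_pow_le_jetIdeal (a : Fin d → ℝ) (k : ℕ) :
    RingHom.ker (eval a) ^ (k + 1) ≤ jetIdeal a k :=
  (Ideal.pow_right_mono (ker_eval_le_comap_taylor_idealOfVars a) _).trans (Ideal.le_comap_pow _ _)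

lemma isCoprime_jetIdeal {a b : Fin d → ℝ} (hab : a ≠ b) (k l : ℕ) :
    IsCoprime (jetIdeal a k) (jetIdeal b l) := by
  have hmax (a : Fin d → ℝ) : (RingHom.ker (eval a)).IsMaximal :=
    RingHom.ker_isMaximal_of_surjective _ fun r => ⟨C r, eval_C r⟩
  have hne : RingHom.ker (eval a) ≠ RingHom.ker (eval b) := by
    intro h
    refine hab (_root_.funext fun i => ?_)
    have : X i - C (a i) ∈ RingHom.ker (eval b) := h ▸ by simp
    simpa [sub_eq_zero, eq_comm] using this
  have hker := Ideal.isCoprime_iff_sup_eq.2 ((hmax a).coprime_of_ne (hmax b) hne)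
  rw [Ideal.isCoprime_iff_sup_eq, eq_top_iff,
    ← Ideal.isCoprime_iff_sup_eq.1 (hker.pow (m := k + 1) (n := l + 1))]
  exact sup_le_sup (ker_eval_pow_le_jetIdeal a k) (ker_eval_pow_le_jetIdeal b l)

theorem exists_eval_pderivPow_eq (a : Fin d → ℝ) (k : ℕ) (c : (Fin d → ℕ) → ℝ) :
    ∃ f : MvPolynomial (Fin d) ℝ,
      ∀ α : Fin d → ℕ, ∑ i, α i ≤ k → eval a (pderivPow α f) = c α := by
  classical
  let B := Fintype.piFinset fun _ : Fin d => Finset.range (k + 1)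
  let g : MvPolynomial (Fin d) ℝ := ∑ β ∈ B,
    monomial (Finsupp.equivFunOnFinite.symm β) (c β / ∏ i, ((β i).factorial : ℝ))
  refine ⟨taylor (-a) g, fun α hα => ?_⟩
  have hαB : α ∈ B := Fintype.mem_piFinset.2 fun i => Finset.mem_range.2 <| Nat.lt_succ_of_le <|
    (Finset.single_le_sum (fun j _ => Nat.zero_le (α j)) (Finset.mem_univ i)).trans hα
  rw [eval_pderivPow_eq_coeff_taylor, taylor_taylor_neg, coeff_sum,
    Finset.sum_eq_single_of_mem α hαB fun β _ hβα => ?_]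
  · rw [coeff_monomial, if_pos rfl, mul_div_cancel₀ _ (prod_factorial_ne_zero α)]
  · rw [coeff_monomial]
    exact if_neg (Finsupp.equivFunOnFinite.symm.injective.ne hβα)

end Jets

section Hermite

variable {d m : ℕ}

noncomputable def hermiteIdeal (X : Fin m → Fin d → ℝ) (p : Fin m → ℕ) :
    Ideal (MvPolynomial (Fin d) ℝ) :=
  ⨅ q, jetIdeal (X q) (p q)

lemma mem_hermiteIdeal_iff {X : Fin m → Fin d → ℝ} {p : Fin m → ℕ}
    {f : MvPolynomial (Fin d) ℝ} :
    f ∈ hermiteIdeal X p ↔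
      ∀ q, ∀ α : Fin d → ℕ, ∑ i, α i ≤ p q → eval (X q) (pderivPow α f) = 0 := by
  simp [hermiteIdeal, mem_jetIdeal_iff]

lemma coe_hermiteIdeal (X : Fin m → Fin d → ℝ) (p : Fin m → ℕ) :
    (hermiteIdeal X p : Set (MvPolynomial (Fin d) ℝ)) = hermiteSet X p :=
  Set.ext fun _ => mem_hermiteIdeal_iff

theorem exists_hermite_interpolant {X : Fin m → Fin d → ℝ} (hX : Function.Injective X)
    (p : Fin m → ℕ) (c : Fin m → (Fin d → ℕ) → ℝ) :
    ∃ F : MvPolynomial (Fin d) ℝ,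
      ∀ q, ∀ α : Fin d → ℕ, ∑ i, α i ≤ p q → eval (X q) (pderivPow α F) = c q α := by
  choose f hf using fun q => exists_eval_pderivPow_eq (X q) (p q) (c q)
  obtain ⟨F, hF⟩ := Ideal.pi_quotient_surjective (I := fun q => jetIdeal (X q) (p q))
    (fun q r hqr => isCoprime_jetIdeal (hX.ne hqr) _ _) fun q => Ideal.Quotient.mk _ (f q)
  refine ⟨F, fun q α hα => ?_⟩
  have h := mem_jetIdeal_iff.1 (Ideal.Quotient.eq.1 (hF q)) α hα
  rwa [map_sub, map_sub, sub_eq_zero, hf q α hα] at h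

end Hermite

end MvPolynomial

namespace MonomialOrder

variable {σ : Type*} (mo : MonomialOrder σ)

lemma image_leadingTerm_sdiff_zero_eq {R : Type*} [CommRing R] (I : Set (MvPolynomial σ R)) :
    mo.leadingTerm '' (I \ {0}) =
      {lt | ∃ h ∈ I, h ≠ 0 ∧ ∃ β₀ ∈ h.support,
        (∀ γ ∈ h.support, mo.toSyn γ ≤ mo.toSyn β₀) ∧ lt = monomial β₀ (h.coeff β₀)} := by
  ext lt
  constructor
  · rintro ⟨h, ⟨hI, h0⟩, rfl⟩
    exact ⟨h, hI, h0, mo.degree h, mo.degree_mem_support h0, fun γ hγ => mo.le_degree hγ, rfl⟩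
  · rintro ⟨h, hI, h0, β₀, hβ₀, hmax, rfl⟩
    have hdeg : mo.degree h = β₀ := mo.toSyn.injective <|
      le_antisymm (hmax _ (mo.degree_mem_support h0)) (mo.le_degree hβ₀)
    exact ⟨h, ⟨hI, h0⟩, by rw [leadingTerm, leadingCoeff, hdeg]⟩

variable {K : Type*} [Field K]

lemma monomial_one_mem_span_leadingTerm_iff {I : Set (MvPolynomial σ K)} {s : σ →₀ ℕ} :
    monomial s (1 : K) ∈ Ideal.span (mo.leadingTerm '' (I \ {0})) ↔
      ∃ h ∈ I, h ≠ 0 ∧ mo.degree h ≤ s := by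
  constructor
  · intro hs
    have hle : Ideal.span (mo.leadingTerm '' (I \ {0})) ≤
        Ideal.span ((monomial · (1 : K)) '' (mo.degree '' (I \ {0}))) := by
      rw [Ideal.span_le]
      rintro _ ⟨h, hh, rfl⟩
      rw [← C_mul_leadingCoeff_monomial_degree]
      exact Ideal.mul_mem_left _ _ (Ideal.subset_span ⟨_, ⟨h, hh, rfl⟩, rfl⟩)
    obtain ⟨_, ⟨h, ⟨hI, h0⟩, rfl⟩, hdeg⟩ :=
      mem_ideal_span_monomial_image.1 (hle hs) s (by classical simp)
    exact ⟨h, hI, h0, hdeg⟩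
  · rintro ⟨h, hI, h0, hdeg⟩
    have hs : monomial s (1 : K) =
        monomial (s - mo.degree h) (mo.leadingCoeff h)⁻¹ * mo.leadingTerm h := by
      rw [leadingTerm, monomial_mul, tsub_add_cancel_of_le hdeg,
        inv_mul_cancel₀ (mo.leadingCoeff_ne_zero_iff.2 h0)]
    rw [hs]
    exact Ideal.mul_mem_left _ _ (Ideal.subset_span ⟨h, ⟨hI, h0⟩, rfl⟩)

def standardExponents (I : Set (MvPolynomial σ K)) : Set (σ →₀ ℕ) :=
  {s | ∀ h ∈ I, h ≠ 0 → ¬ mo.degree h ≤ s}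

lemma span_standardMonomials_eq (I : Set (MvPolynomial σ K)) :
    Submodule.span K {g | ∃ β : σ →₀ ℕ, g = monomial β (1 : K) ∧
        g ∉ Ideal.span (mo.leadingTerm '' (I \ {0}))} =
      restrictSupport K (mo.standardExponents I) := by
  rw [restrictSupport_eq_span]
  congr 1
  ext g
  constructor
  · rintro ⟨β, rfl, hβ⟩
    exact ⟨β, fun h hI h0 hle => hβ (mo.monomial_one_mem_span_leadingTerm_iff.2 ⟨h, hI, h0, hle⟩),
      rfl⟩
  · rintro ⟨β, hβ, rfl⟩
    refine ⟨β, rfl, fun hmem => ?_⟩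
    obtain ⟨h, hI, h0, hle⟩ := mo.monomial_one_mem_span_leadingTerm_iff.1 hmem
    exact hβ h hI h0 hle

theorem exists_add_mem_restrictSupport_standardExponents (I : Ideal (MvPolynomial σ K))
    (f : MvPolynomial σ K) :
    ∃ u ∈ I, ∃ r ∈ restrictSupport K (mo.standardExponents (I : Set (MvPolynomial σ K))),
      f = u + r := by
  obtain ⟨g, r, hf, -, hr⟩ := mo.div_set (B := (I : Set (MvPolynomial σ K)) \ {0})
    (fun b hb => (mo.leadingCoeff_ne_zero_iff.2 hb.2).isUnit) f
  refine ⟨_, ?_, r, fun s hs h hI h0 => hr s hs h ⟨hI, h0⟩, hf⟩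
  have hspan := (Finsupp.mem_span_iff_linearCombination _ _ _).2 ⟨g, rfl⟩
  exact Ideal.span_le.2 Set.sdiff_subset hspan

theorem eq_zero_of_mem_restrictSupport_standardExponents {I : Set (MvPolynomial σ K)}
    {f : MvPolynomial σ K} (hfI : f ∈ I) (hf : f ∈ restrictSupport K (mo.standardExponents I)) :
    f = 0 := by
  by_contra h0
  exact hf (mo.degree_mem_support h0) f hfI h0 le_rfl

end MonomialOrder

theorem hermite_unique_solution_in_SI_general {d m : ℕ}
    (X : Fin m → (Fin d → ℝ)) (hX : Function.Injective X) (p : Fin m → ℕ)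
    (mo : MonomialOrder (Fin d)) :
    ∀ c : Fin m → (Fin d → ℕ) → ℝ,
      ∃! f : MvPolynomial (Fin d) ℝ,
        f ∈ Submodule.span ℝ {g : MvPolynomial (Fin d) ℝ |
              ∃ β : Fin d →₀ ℕ, g = monomial β (1 : ℝ) ∧
                g ∉ Ideal.span {lt : MvPolynomial (Fin d) ℝ |
                  ∃ h ∈ hermiteSet X p, h ≠ 0 ∧ ∃ β₀ ∈ h.support,
                    (∀ γ ∈ h.support, mo.toSyn γ ≤ mo.toSyn β₀) ∧
                    lt = monomial β₀ (h.coeff β₀)}} ∧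
        ∀ q, ∀ α : Fin d → ℕ, (∑ i, α i) ≤ p q →
          MvPolynomial.eval (X q) (pderivPow α f) = c q α := by
  intro c
  rw [← coe_hermiteIdeal, ← mo.image_leadingTerm_sdiff_zero_eq, mo.span_standardMonomials_eq]
  obtain ⟨F, hF⟩ := exists_hermite_interpolant hX p c
  obtain ⟨u, hu, r, hr, rfl⟩ :=
    mo.exists_add_mem_restrictSupport_standardExponents (hermiteIdeal X p) F
  have hr_jets : ∀ q, ∀ α : Fin d → ℕ, ∑ i, α i ≤ p q → eval (X q) (pderivPow α r) = c q α :=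
    fun q α hα => by rw [← hF q α hα, map_add, map_add, mem_hermiteIdeal_iff.1 hu q α hα, zero_add]
  refine ⟨r, ⟨hr, hr_jets⟩, fun g ⟨hg, hg_jets⟩ => sub_eq_zero.1 ?_⟩
  refine mo.eq_zero_of_mem_restrictSupport_standardExponents ?_ (sub_mem hg hr)
  refine mem_hermiteIdeal_iff.2 fun q α hα => ?_
  rw [map_sub, map_sub, hg_jets q α hα, hr_jets q α hα, sub_self]

/-- The Hermite interpolation problem has a unique solution in the space `S_I` spanned by
the monomials not lying in the ideal generated by the leading terms of the Hermite ideal. -/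
theorem hermite_unique_solution_in_SI {d m : ℕ} (hd : 0 < d) (hm : 0 < m)
    (X : Fin m → (Fin d → ℝ)) (hX : Function.Injective X) (p : Fin m → ℕ)
    (mo : MonomialOrder (Fin d)) :
    ∀ c : Fin m → (Fin d → ℕ) → ℝ,
      ∃! f : MvPolynomial (Fin d) ℝ,
        f ∈ Submodule.span ℝ {g : MvPolynomial (Fin d) ℝ |
              ∃ β : Fin d →₀ ℕ, g = monomial β (1 : ℝ) ∧
                g ∉ Ideal.span {lt : MvPolynomial (Fin d) ℝ |
                  ∃ h ∈ hermiteSet X p, h ≠ 0 ∧ ∃ β₀ ∈ h.support,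
                    (∀ γ ∈ h.support, mo.toSyn γ ≤ mo.toSyn β₀) ∧
                    lt = monomial β₀ (h.coeff β₀)}} ∧
        ∀ q, ∀ α : Fin d → ℕ, (∑ i, α i) ≤ p q →
          MvPolynomial.eval (X q) (pderivPow α f) = c q α :=
  hermite_unique_solution_in_SI_general X hX p mo
end

section
/- Let d ≥ 1 and m ≥ 2, let X_1,…,X_m be pairwise distinct points in ℝ^d, let p_1,…,p_m be nonnegative integers, and suppose the Hermite interpolation problem (X,p) is regular on Π_n^d. Then for every pair of distinct indices q ≠ r in {1,…,m}, one has n ≥ p_q + p_r + 1. In particular, with the orders arranged so that p_1 ≤ ⋯ ≤ p_m, n ≥ p_m + p_{m−1} + 1. -/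
open MvPolynomial

namespace HermiteAux

variable {d : ℕ}

noncomputable abbrev D (i : Fin d) : Module.End ℝ (MvPolynomial (Fin d) ℝ) :=
  (MvPolynomial.pderiv i).toLinearMap

lemma pderiv_X_eq (a k : Fin d) :
    pderiv a (MvPolynomial.X (R := ℝ) k) = if a = k then 1 else 0 := by
  by_cases h : a = k
  · subst h; simp
  · simp [h, pderiv_X_of_ne (fun hh => h hh.symm)]

set_option linter.unnecessarySeqFocus false in
lemma pderiv_pderiv_comm (i j : Fin d) (f : MvPolynomial (Fin d) ℝ) :
    pderiv i (pderiv j f) = pderiv j (pderiv i f) := by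
  induction f using MvPolynomial.induction_on with
  | C a => simp
  | add p q hp hq => simp only [map_add, hp, hq]
  | mul_X p k hp =>
      simp only [pderiv_mul, map_add, hp, pderiv_X_eq]
      split <;> split <;> simp <;> ring

lemma D_comm (i j : Fin d) : Commute (D i) (D j) :=
  LinearMap.ext fun f => pderiv_pderiv_comm i j f

lemma D_pow_comm (i j : Fin d) (a b : ℕ) : Commute (D i ^ a) (D j ^ b) :=
  (D_comm i j).pow_pow a b

/-- product over a list with pointwise-added exponents -/
lemma prod_pow_add (l : List (Fin d)) (β γ : Fin d → ℕ) :
    (l.map fun j => D j ^ (β j + γ j)).prod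
      = (l.map fun j => D j ^ β j).prod * (l.map fun j => D j ^ γ j).prod := by
  induction l with
  | nil => simp
  | cons a t ih =>
      have hc : Commute ((t.map fun j => D j ^ β j).prod) (D a ^ γ a) :=
        Commute.list_prod_left _ _ (fun x hx => by
          obtain ⟨j, -, rfl⟩ := List.mem_map.mp hx
          exact D_pow_comm j a _ _)
      rw [List.map_cons, List.map_cons, List.map_cons, List.prod_cons, List.prod_cons,
        List.prod_cons, ih, pow_add, hc.mul_mul_mul_comm]

end HermiteAux

namespace HermiteAux

lemma pderivPow_add (α β : Fin d → ℕ) :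
    pderivPow (fun j => α j + β j) = pderivPow α * pderivPow β :=
  prod_pow_add _ _ _

lemma pderivPow_zero : pderivPow (fun _ : Fin d => 0) = 1 := by
  unfold pderivPow
  apply List.prod_eq_one
  intro x hx
  obtain ⟨j, -, rfl⟩ := List.mem_map.mp hx
  exact pow_zero _

lemma prod_pow_single (i : Fin d) (l : List (Fin d)) (hn : l.Nodup) (hi : i ∈ l) :
    (l.map fun j => D j ^ (Pi.single i 1 : Fin d → ℕ) j).prod = D i := by
  induction l with
  | nil => cases hi
  | cons a t ih =>
      rw [List.map_cons, List.prod_cons]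
      rcases List.mem_cons.mp hi with rfl | hit
      · have ha : i ∉ t := (List.nodup_cons.mp hn).1
        have h1 : (t.map fun j => D j ^ (Pi.single i 1 : Fin d → ℕ) j).prod = 1 := by
          apply List.prod_eq_one
          intro x hx
          obtain ⟨j, hj, rfl⟩ := List.mem_map.mp hx
          have hja : j ≠ i := fun h => ha (h ▸ hj)
          simp [Pi.single_eq_of_ne hja]
        simp [h1, Pi.single_eq_same]
      · have ha : a ≠ i := fun h => (List.nodup_cons.mp hn).1 (h ▸ hit)
        have h0 : (Pi.single i 1 : Fin d → ℕ) a = 0 := Pi.single_eq_of_ne ha 1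
        simp [h0, ih (List.nodup_cons.mp hn).2 hit]

lemma pderivPow_single (i : Fin d) : pderivPow (Pi.single i 1) = D i :=
  prod_pow_single i _ (List.nodup_finRange d) (List.mem_finRange i)

lemma pderivPow_succ (α : Fin d → ℕ) (i : Fin d) :
    pderivPow (fun j => α j + (Pi.single i 1 : Fin d → ℕ) j) = pderivPow α * D i := by
  rw [pderivPow_add, pderivPow_single]

end HermiteAux

namespace HermiteAux

noncomputable def Dv (v : Fin d → ℝ) : Module.End ℝ (MvPolynomial (Fin d) ℝ) :=
  ∑ i, v i • D i

lemma eval_pderivPow_Dv_pow (x v : Fin d → ℝ) (f : MvPolynomial (Fin d) ℝ) (K : ℕ)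
    (h : ∀ α : Fin d → ℕ, (∑ i, α i) ≤ K → MvPolynomial.eval x (pderivPow α f) = 0) :
    ∀ k, ∀ α : Fin d → ℕ, (∑ i, α i) + k ≤ K →
      MvPolynomial.eval x (pderivPow α ((Dv v ^ k) f)) = 0 := by
  intro k
  induction k with
  | zero =>
      intro α hα
      simpa using h α (by simpa using hα)
  | succ k ih =>
      intro α hα
      have hstep : (Dv v ^ (k + 1)) f = Dv v ((Dv v ^ k) f) := by
        rw [pow_succ']; rfl
      rw [hstep]
      have hDv : Dv v ((Dv v ^ k) f) = ∑ i, v i • D i ((Dv v ^ k) f) := by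
        simp [Dv, LinearMap.sum_apply, LinearMap.smul_apply]
      rw [hDv, map_sum, map_sum]
      refine Finset.sum_eq_zero fun i _ => ?_
      rw [LinearMap.map_smul, MvPolynomial.smul_eq_C_mul, map_mul, MvPolynomial.eval_C]
      have hcomp : pderivPow α (D i ((Dv v ^ k) f))
          = pderivPow (fun j => α j + (Pi.single i 1 : Fin d → ℕ) j) ((Dv v ^ k) f) := by
        rw [pderivPow_succ]; rfl
      rw [hcomp, ih _ (by simp [Finset.sum_add_distrib, Finset.sum_pi_single]; omega), mul_zero]

lemma eval_Dv_pow (x v : Fin d → ℝ) (f : MvPolynomial (Fin d) ℝ) (K : ℕ)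
    (h : ∀ α : Fin d → ℕ, (∑ i, α i) ≤ K → MvPolynomial.eval x (pderivPow α f) = 0)
    {k : ℕ} (hk : k ≤ K) :
    MvPolynomial.eval x ((Dv v ^ k) f) = 0 := by
  have := eval_pderivPow_Dv_pow x v f K h k (fun _ => 0) (by simpa using hk)
  rwa [pderivPow_zero, Module.End.one_apply] at this

end HermiteAux

namespace HermiteAux

lemma Dv_apply (v : Fin d → ℝ) (g : MvPolynomial (Fin d) ℝ) :
    Dv v g = ∑ j, v j • pderiv j g := by
  simp [Dv, LinearMap.sum_apply, LinearMap.smul_apply]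

lemma Dv_C (v : Fin d → ℝ) (a : ℝ) : Dv v (C a : MvPolynomial (Fin d) ℝ) = 0 := by
  simp [Dv_apply, pderiv_C]

lemma Dv_mul_X (v : Fin d → ℝ) (p : MvPolynomial (Fin d) ℝ) (i : Fin d) :
    Dv v (p * X i) = Dv v p * X i + v i • p := by
  rw [Dv_apply]
  have : ∀ j, v j • pderiv j (p * X i)
      = v j • pderiv j p * X i + v j • (p * pderiv j (X i)) := by
    intro j
    rw [pderiv_mul, smul_add, smul_mul_assoc]
  rw [Finset.sum_congr rfl fun j _ => this j, Finset.sum_add_distrib, ← Finset.sum_mul,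
    ← Dv_apply]
  congr 1
  rw [Finset.sum_eq_single i]
  · rw [pderiv_X_self, mul_one]
  · intro j _ hji
    rw [pderiv_X_eq, if_neg hji, mul_zero, smul_zero]
  · intro hi; exact absurd (Finset.mem_univ i) hi

noncomputable def L (x v : Fin d → ℝ) : Fin d → Polynomial ℝ :=
  fun i => Polynomial.C (x i) + Polynomial.C (v i) * Polynomial.X

lemma derivative_aeval (x v : Fin d → ℝ) (f : MvPolynomial (Fin d) ℝ) :
    Polynomial.derivative (aeval (L x v) f) = aeval (L x v) (Dv v f) := by
  induction f using MvPolynomial.induction_on with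
  | C a => simp [Dv_C, aeval_C]
  | add p q hp hq => simp only [map_add, Polynomial.derivative_add, hp, hq]
  | mul_X p i hp =>
      have hLd : Polynomial.derivative (aeval (L x v) (X i : MvPolynomial (Fin d) ℝ)) = Polynomial.C (v i) := by
        simp [L, aeval_X]
      have hsm : (aeval (L x v)) (v i • p) = Polynomial.C (v i) * aeval (L x v) p := by
        rw [MvPolynomial.smul_eq_C_mul, map_mul, aeval_C, Polynomial.algebraMap_eq]
      rw [map_mul, Polynomial.derivative_mul, hp, hLd, Dv_mul_X, map_add, map_mul, hsm]
      ring

lemma iterate_derivative_aeval (x v : Fin d → ℝ) (f : MvPolynomial (Fin d) ℝ) (k : ℕ) :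
    Polynomial.derivative^[k] (aeval (L x v) f) = aeval (L x v) ((Dv v ^ k) f) := by
  induction k with
  | zero => simp
  | succ k ih =>
      rw [Function.iterate_succ_apply', ih, derivative_aeval]
      congr 1
      rw [pow_succ']
      rfl

lemma eval_aeval (x v : Fin d → ℝ) (t : ℝ) (h : MvPolynomial (Fin d) ℝ) :
    Polynomial.eval t (aeval (L x v) h) = MvPolynomial.eval (fun i => x i + v i * t) h := by
  rw [MvPolynomial.aeval_def, ← Polynomial.coe_evalRingHom, MvPolynomial.eval₂_comp_left]
  have h1 : (Polynomial.evalRingHom t).comp (algebraMap ℝ (Polynomial ℝ)) = RingHom.id ℝ := by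
    ext a; simp
  have h2 : (Polynomial.evalRingHom t) ∘ (L x v) = fun i => x i + v i * t := by
    funext i; simp [L]
  rw [h1, h2]
  rfl

end HermiteAux

set_option linter.unusedVariables false in
open HermiteAux in
/-- If the Hermite interpolation problem `(X,p)` on `m ≥ 2` nodes is regular on `Π_n^d`,
then `n ≥ p_q + p_r + 1` for all pairs of distinct indices `q ≠ r`. -/
theorem regular_implies_degree_lower_bound {d m n : ℕ} (hd : 1 ≤ d) (hm : 2 ≤ m)
    (X : Fin m → (Fin d → ℝ)) (hX : Function.Injective X) (p : Fin m → ℕ)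
    (hreg : ∀ c : Fin m → (Fin d → ℕ) → ℝ, ∃! f : MvPolynomial (Fin d) ℝ,
        f.totalDegree ≤ n ∧ ∀ q, ∀ α : Fin d → ℕ, (∑ i, α i) ≤ p q →
          MvPolynomial.eval (X q) (pderivPow α f) = c q α) :
    ∀ q r : Fin m, q ≠ r → p q + p r + 1 ≤ n := by
  intro q r hqr
  classical
  set v : Fin d → ℝ := fun i => X r i - X q i with hv
  have hXqr : X q ≠ X r := fun h => hqr (hX h)
  obtain ⟨j, hj⟩ : ∃ j, v j ≠ 0 := by
    obtain ⟨i0, hi0⟩ := Function.ne_iff.mp hXqr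
    exact ⟨i0, sub_ne_zero_of_ne (Ne.symm hi0)⟩
  set G : MvPolynomial (Fin d) ℝ :=
    (MvPolynomial.C (v j)⁻¹ * (MvPolynomial.X j - MvPolynomial.C (X q j))) ^ p q with hG
  obtain ⟨f, ⟨hdeg, hvals⟩, -⟩ :=
    hreg (fun q' α => if q' = q then MvPolynomial.eval (X q) (pderivPow α G) else 0)
  set g : Polynomial ℝ := aeval (L (X q) v) f with hg
  -- degree bound
  have hL1 : ∀ i, (L (X q) v i).natDegree ≤ 1 := by
    intro i
    refine (Polynomial.natDegree_add_le _ _).trans (max_le (by simp) ?_)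
    exact (Polynomial.natDegree_C_mul_le _ _).trans (by simp)
  have hgdeg : g.natDegree ≤ n := by
    have := MvPolynomial.aeval_natDegree_le f hdeg (L (X q) v) hL1
    simpa using this
  -- the restriction of G to the line is X ^ p q
  have hLsub : aeval (L (X q) v) (MvPolynomial.X j - MvPolynomial.C (X q j) : MvPolynomial (Fin d) ℝ)
      = Polynomial.C (v j) * Polynomial.X := by
    rw [map_sub, aeval_X, aeval_C, Polynomial.algebraMap_eq]
    simp [L]
  have hGline : aeval (L (X q) v) G = Polynomial.X ^ p q := by
    rw [hG, map_pow, map_mul, hLsub, aeval_C, Polynomial.algebraMap_eq, ← mul_assoc,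
      ← Polynomial.C_mul, inv_mul_cancel₀ hj, Polynomial.C_1, one_mul]
  -- derivative data at 0
  have h0 : ∀ k ≤ p q, (Polynomial.derivative^[k] g).eval 0
      = (Polynomial.derivative^[k] (Polynomial.X ^ p q : Polynomial ℝ)).eval 0 := by
    intro k hk
    rw [hg, iterate_derivative_aeval, ← hGline, iterate_derivative_aeval,
      eval_aeval, eval_aeval]
    have hx0 : (fun i => X q i + v i * 0) = X q := funext fun i => by ring
    rw [hx0]
    have hsub : MvPolynomial.eval (X q) ((Dv v ^ k) (f - G)) = 0 := by
      refine eval_Dv_pow (X q) v (f - G) (p q) (fun α hα => ?_) hk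
      rw [map_sub, map_sub, hvals q α hα, if_pos rfl, sub_self]
    rw [map_sub, map_sub] at hsub
    exact sub_eq_zero.mp hsub
  -- derivative data at 1
  have h1 : ∀ k ≤ p r, (Polynomial.derivative^[k] g).eval 1 = 0 := by
    intro k hk
    rw [hg, iterate_derivative_aeval, eval_aeval]
    have hx1 : (fun i => X q i + v i * 1) = X r := funext fun i => by rw [hv]; ring
    rw [hx1]
    refine eval_Dv_pow (X r) v f (p r) (fun α hα => ?_) hk
    rw [hvals r α hα, if_neg (fun h => hqr h.symm)]
  -- g is nonzero
  have hgpq : (Polynomial.derivative^[p q] g).eval 0 = ((p q).factorial : ℝ) := by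
    rw [h0 _ le_rfl, Polynomial.iterate_derivative_X_pow_eq_smul]
    simp [Nat.descFactorial_self]
  have hgne : g ≠ 0 := by
    intro h
    rw [h] at hgpq
    simp only [Polynomial.iterate_derivative_zero, Polynomial.eval_zero] at hgpq
    exact Nat.cast_ne_zero.mpr (Nat.factorial_ne_zero (p q)) hgpq.symm
  -- root multiplicities
  have hm0 : p q ≤ g.rootMultiplicity 0 := by
    rcases Nat.eq_zero_or_pos (p q) with h | h
    · simp [h]
    · have hlt := Polynomial.lt_rootMultiplicity_of_isRoot_iterate_derivative_of_mem_nonZeroDivisors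
        (p := g) (t := 0) (n := p q - 1) hgne (fun k hk => ?_)
        (mem_nonZeroDivisors_of_ne_zero (Nat.cast_ne_zero.mpr (Nat.factorial_ne_zero _)))
      · omega
      · have hkpq : k < p q := by omega
        rw [Polynomial.IsRoot, h0 k hkpq.le, Polynomial.iterate_derivative_X_pow_eq_smul]
        simp [zero_pow (Nat.sub_ne_zero_of_lt hkpq)]
  have hm1 : p r + 1 ≤ g.rootMultiplicity 1 := by
    have hlt := Polynomial.lt_rootMultiplicity_of_isRoot_iterate_derivative_of_mem_nonZeroDivisors
      (p := g) (t := 1) (n := p r) hgne (fun k hk => h1 k hk)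
      (mem_nonZeroDivisors_of_ne_zero (Nat.cast_ne_zero.mpr (Nat.factorial_ne_zero _)))
    omega
  -- divisibility
  have hdvd0 : Polynomial.X ^ p q ∣ g := by
    have := (Polynomial.le_rootMultiplicity_iff hgne).mp hm0
    simpa using this
  have hdvd1 : (Polynomial.X - Polynomial.C 1) ^ (p r + 1) ∣ g :=
    (Polynomial.le_rootMultiplicity_iff hgne).mp hm1
  have hcop : IsCoprime (Polynomial.X ^ p q : Polynomial ℝ)
      ((Polynomial.X - Polynomial.C 1) ^ (p r + 1)) := by
    refine IsCoprime.pow ⟨1, -1, ?_⟩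
    simp only [one_mul, neg_mul, Polynomial.C_1]
    ring
  have hdvd : Polynomial.X ^ p q * (Polynomial.X - Polynomial.C 1) ^ (p r + 1) ∣ g :=
    hcop.mul_dvd hdvd0 hdvd1
  have hfinal := Polynomial.natDegree_le_of_dvd hdvd hgne
  rw [Polynomial.Monic.natDegree_mul (Polynomial.monic_X_pow _)
    ((Polynomial.monic_X_sub_C 1).pow _), Polynomial.natDegree_X_pow,
    Polynomial.natDegree_pow, Polynomial.natDegree_X_sub_C, mul_one] at hfinal
  omega
end

section
/- Let d ≥ 2 and m ≥ 2, let p_1,…,p_m be nonnegative integers and n a nonnegative integer satisfying binom(n+d,d) = Σ_{q=1}^m binom(p_q+d,d). If p_1 + p_2 + ⋯ + p_m + m ≤ n·d, then the Hermite interpolation scheme is singular: for every choice of pairwise distinct points X_1,…,X_m ∈ ℝ^d there exists a nonzero polynomial f of total degree at most n such that ∂^α f(X_q) = 0 for all 1 ≤ q ≤ m and all multi-indices α with |α| ≤ p_q. -/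
open MvPolynomial

/-- The ideal of polynomials vanishing at `x`. -/
noncomputable def evalIdeal {d : ℕ} (x : Fin d → ℝ) : Ideal (MvPolynomial (Fin d) ℝ) :=
  RingHom.ker (MvPolynomial.eval x)

lemma pderiv_mem_pow {d : ℕ} (x : Fin d → ℝ) (i : Fin d) :
    ∀ (k : ℕ) (f : MvPolynomial (Fin d) ℝ), f ∈ (evalIdeal x) ^ (k + 1) →
      MvPolynomial.pderiv i f ∈ (evalIdeal x) ^ k := by
  intro k
  induction k with
  | zero => intro f _; simp
  | succ k ih =>
    intro f hf
    rw [pow_succ] at hf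
    refine Submodule.mul_induction_on hf (fun a ha b hb => ?_) (fun u v hu hv => ?_)
    · rw [pderiv_mul]
      refine add_mem (Ideal.mul_mem_mul (ih a ha) hb) ?_
      exact (pow_succ (evalIdeal x) k) ▸ Ideal.mul_mem_right _ _ ha
    · simpa [map_add] using add_mem hu hv

lemma pderiv_iter_mem_pow {d : ℕ} (x : Fin d → ℝ) (i : Fin d) :
    ∀ (j k : ℕ) (f : MvPolynomial (Fin d) ℝ), f ∈ (evalIdeal x) ^ k →
      ((MvPolynomial.pderiv i).toLinearMap ^ j) f ∈ (evalIdeal x) ^ (k - j) := by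
  intro j
  induction j with
  | zero => intro k f hf; simpa using hf
  | succ j ih =>
    intro k f hf
    have h1 : MvPolynomial.pderiv i f ∈ (evalIdeal x) ^ (k - 1) := by
      rcases k with _ | k
      · simp
      · simpa using pderiv_mem_pow x i k f hf
    have h2 := ih (k - 1) _ h1
    rw [pow_succ, Module.End.mul_apply]
    have h3 : k - 1 - j = k - (j + 1) := by omega
    rw [h3] at h2
    exact h2

lemma pderivPow_list_mem {d : ℕ} (x : Fin d → ℝ) (α : Fin d → ℕ) :
    ∀ (L : List (Fin d)) (k : ℕ) (f : MvPolynomial (Fin d) ℝ), f ∈ (evalIdeal x) ^ k →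
      ((L.map fun i => ((MvPolynomial.pderiv i).toLinearMap ^ α i)).prod) f
        ∈ (evalIdeal x) ^ (k - (L.map α).sum) := by
  intro L
  induction L with
  | nil => intro k f hf; simpa using hf
  | cons i L ih =>
    intro k f hf
    have h1 := ih k f hf
    have h2 := pderiv_iter_mem_pow x i (α i) _ _ h1
    simp only [List.map_cons, List.prod_cons, List.sum_cons, Module.End.mul_apply]
    have h3 : k - (L.map α).sum - α i = k - (α i + (L.map α).sum) := by omega
    rw [h3] at h2
    exact h2

lemma pderivPow_mem {d : ℕ} (x : Fin d → ℝ) (α : Fin d → ℕ) (k : ℕ)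
    (f : MvPolynomial (Fin d) ℝ) (hf : f ∈ (evalIdeal x) ^ k) :
    pderivPow α f ∈ (evalIdeal x) ^ (k - ∑ i, α i) := by
  have hsum : ((List.finRange d).map α).sum = ∑ i, α i := by
    rw [Finset.sum]
    simp [Finset.univ, Fintype.elems, Multiset.map_coe, Multiset.sum_coe]
  have h := pderivPow_list_mem x α (List.finRange d) k f hf
  rw [hsum] at h
  exact h

/-- A nonzero affine polynomial vanishing on at most `d` prescribed points. -/
lemma exists_affine_vanishing {d m : ℕ} (X : Fin m → (Fin d → ℝ)) (S : Finset (Fin m))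
    (hS : S.card ≤ d) :
    ∃ ℓ : MvPolynomial (Fin d) ℝ, ℓ ≠ 0 ∧ ℓ.totalDegree ≤ 1 ∧
      ∀ q ∈ S, MvPolynomial.eval (X q) ℓ = 0 := by
  classical
  let L : ((Fin d → ℝ) × ℝ) →ₗ[ℝ] (S → ℝ) :=
    { toFun := fun ac q => (∑ i, ac.1 i * X q i) + ac.2
      map_add' := by
        intro u v; funext q; simp [add_mul, Finset.sum_add_distrib]; ring
      map_smul' := by
        intro r u; funext q; simp [Finset.mul_sum, mul_add, mul_assoc] }
  have hrank : Module.finrank ℝ (S → ℝ) < Module.finrank ℝ ((Fin d → ℝ) × ℝ) := by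
    simp only [Module.finrank_prod, Module.finrank_pi, Module.finrank_self]
    rw [Fintype.card_coe, Fintype.card_fin]
    omega
  have hker : LinearMap.ker L ≠ ⊥ := LinearMap.ker_ne_bot_of_finrank_lt hrank
  obtain ⟨⟨a, c⟩, hmem, hne⟩ := Submodule.exists_mem_ne_zero_of_ne_bot hker
  set ℓ : MvPolynomial (Fin d) ℝ := (∑ i, MvPolynomial.C (a i) * MvPolynomial.X i) +
    MvPolynomial.C c with hℓ
  have heval : ∀ y : Fin d → ℝ, MvPolynomial.eval y ℓ = (∑ i, a i * y i) + c := by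
    intro y; simp [hℓ]
  refine ⟨ℓ, ?_, ?_, ?_⟩
  · intro h0
    apply hne
    have hc : c = 0 := by
      have h := heval 0
      rw [h0] at h; simpa using h.symm
    have ha : a = 0 := by
      funext i
      have h := heval (Pi.single i 1)
      rw [h0] at h
      simp [Pi.single_apply, Finset.sum_ite_eq', hc] at h
      exact h.symm
    simp [ha, hc]
  · refine le_trans (MvPolynomial.totalDegree_add _ _) ?_
    simp only [MvPolynomial.totalDegree_C, max_le_iff]
    constructor
    · refine le_trans (MvPolynomial.totalDegree_finset_sum _ _) ?_
      refine Finset.sup_le fun i _ => ?_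
      refine le_trans (MvPolynomial.totalDegree_mul _ _) ?_
      simp [MvPolynomial.totalDegree_X]
    · omega
  · intro q hq
    have h := congrFun (LinearMap.mem_ker.mp hmem) ⟨q, hq⟩
    rw [heval]
    simpa [L] using h

/-- Key recursion: schedule hyperplanes. -/
lemma key_lemma {d m : ℕ} (X : Fin m → (Fin d → ℝ)) :
    ∀ (n : ℕ) (c : Fin m → ℕ), (∀ q, c q ≤ n) → (∑ q, c q) ≤ n * d →
    ∃ f : MvPolynomial (Fin d) ℝ, f ≠ 0 ∧ f.totalDegree ≤ n ∧
      ∀ q, f ∈ (evalIdeal (X q)) ^ (c q) := by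
  classical
  intro n
  induction n with
  | zero =>
    intro c hc _
    refine ⟨1, one_ne_zero, by simp, fun q => ?_⟩
    have : c q = 0 := Nat.le_zero.mp (hc q)
    simp [this]
  | succ n ih =>
    intro c hc hsum
    set T : Finset (Fin m) := Finset.univ.filter (fun q => c q = n + 1) with hT
    set U : Finset (Fin m) := Finset.univ.filter (fun q => 1 ≤ c q) with hU
    have hTU : T ⊆ U := by
      intro q hq
      simp only [hT, Finset.mem_filter] at hq
      simp only [hU, Finset.mem_filter]
      exact ⟨hq.1, by omega⟩
    have hTcard : T.card ≤ d := by
      have h1 : (n + 1) * T.card = ∑ q ∈ T, c q := by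
        rw [Finset.sum_congr rfl (fun q hq => by
          simp only [hT, Finset.mem_filter] at hq; exact hq.2)]
        simp [Finset.sum_const, Nat.mul_comm]
      have h2 : ∑ q ∈ T, c q ≤ ∑ q, c q :=
        Finset.sum_le_sum_of_subset (Finset.subset_univ T)
      have h3 : (n + 1) * T.card ≤ (n + 1) * d := by
        rw [h1]; exact le_trans h2 hsum
      exact Nat.le_of_mul_le_mul_left h3 (Nat.succ_pos n)
    obtain ⟨S, hTS, hSU, hScard⟩ :
        ∃ S : Finset (Fin m), T ⊆ S ∧ S ⊆ U ∧ (S.card ≤ d ∧ (S = U ∨ S.card = d)) := by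
      by_cases hUc : U.card ≤ d
      · exact ⟨U, hTU, Finset.Subset.refl U, hUc, Or.inl rfl⟩
      · obtain ⟨S, h1, h2, h3⟩ := Finset.exists_subsuperset_card_eq hTU hTcard (by omega)
        exact ⟨S, h1, h2, le_of_eq h3, Or.inr h3⟩
    set c' : Fin m → ℕ := fun q => if q ∈ S then c q - 1 else c q with hc'
    have hSpos : ∀ q ∈ S, 1 ≤ c q := by
      intro q hq
      have h := hSU hq
      simp only [hU, Finset.mem_filter] at h
      exact h.2
    have hc'le : ∀ q, c' q ≤ n := by
      intro q
      by_cases h : q ∈ S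
      · simp only [hc', if_pos h]
        have := hc q; omega
      · simp only [hc', if_neg h]
        have hqT : q ∉ T := fun hh => h (hTS hh)
        simp only [hT, Finset.mem_filter] at hqT
        have h1 := hc q
        have h2 : c q ≠ n + 1 := fun hh => hqT ⟨Finset.mem_univ q, hh⟩
        omega
    have hsum' : (∑ q, c' q) + S.card = ∑ q, c q := by
      have hpt : ∀ q, c' q + (if q ∈ S then 1 else 0) = c q := by
        intro q
        by_cases h : q ∈ S
        · have := hSpos q h; simp only [hc', if_pos h]; omega
        · simp [hc', if_neg h]
      calc (∑ q, c' q) + S.card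
          = ∑ q, (c' q + if q ∈ S then 1 else 0) := by
            rw [Finset.sum_add_distrib]
            congr 1
            rw [Finset.sum_ite_mem, Finset.univ_inter, Finset.sum_const, smul_eq_mul, mul_one]
        _ = ∑ q, c q := Finset.sum_congr rfl (fun q _ => hpt q)
    have hnd : (n + 1) * d = n * d + d := by ring
    have hsum'' : ∑ q, c' q ≤ n * d := by
      rcases hScard.2 with hSeq | hSd
      · have hout : ∀ q ∉ S, c q = 0 := by
          intro q hq
          by_contra h
          have hqU : q ∈ U := by
            simp only [hU, Finset.mem_filter]; exact ⟨Finset.mem_univ q, by omega⟩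
          rw [← hSeq] at hqU; exact hq hqU
        have he : ∑ q, c q = ∑ q ∈ S, c q :=
          (Finset.sum_subset (Finset.subset_univ S) (fun q _ hq => hout q hq)).symm
        have hb : ∑ q ∈ S, c q ≤ S.card * (n + 1) := by
          calc ∑ q ∈ S, c q ≤ ∑ q ∈ S, (n + 1) := Finset.sum_le_sum (fun q _ => hc q)
            _ = S.card * (n + 1) := by simp [Nat.mul_comm]
        have hSd := hScard.1
        have hcn : S.card * (n + 1) = S.card + S.card * n := by ring
        have hmono : S.card * n ≤ d * n := Nat.mul_le_mul_right n hSd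
        have hdn : d * n = n * d := Nat.mul_comm d n
        omega
      · omega
    obtain ⟨g, hg0, hgdeg, hgmem⟩ := ih c' hc'le hsum''
    obtain ⟨ℓ, hℓ0, hℓdeg, hℓeval⟩ := exists_affine_vanishing X S hScard.1
    refine ⟨ℓ * g, mul_ne_zero hℓ0 hg0, ?_, ?_⟩
    · refine le_trans (MvPolynomial.totalDegree_mul _ _) ?_
      omega
    · intro q
      by_cases h : q ∈ S
      · have h1 : ℓ ∈ evalIdeal (X q) := RingHom.mem_ker.mpr (hℓeval q h)
        have h2 : g ∈ (evalIdeal (X q)) ^ (c q - 1) := by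
          have hg := hgmem q
          simp only [hc'] at hg
          rwa [if_pos h] at hg
        have h4 := Ideal.mul_mem_mul h1 h2
        rw [← pow_succ'] at h4
        have hcq := hSpos q h
        rwa [Nat.sub_add_cancel hcq] at h4
      · have h2 : g ∈ (evalIdeal (X q)) ^ (c q) := by
          have hg := hgmem q
          simp only [hc'] at hg
          rwa [if_neg h] at hg
        exact Ideal.mul_mem_left _ _ h2

/-- If `p_1 + ⋯ + p_m + m ≤ n·d`, the Hermite interpolation scheme is singular. -/
theorem singular_of_sum_le {d m n : ℕ} (hd : 2 ≤ d) (hm : 2 ≤ m) (p : Fin m → ℕ)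
    (hdim : Nat.choose (n + d) d = ∑ q, Nat.choose (p q + d) d)
    (hineq : (∑ q, p q) + m ≤ n * d)
    (X : Fin m → (Fin d → ℝ)) (hX : Function.Injective X) :
    ∃ f : MvPolynomial (Fin d) ℝ, f ≠ 0 ∧ f.totalDegree ≤ n ∧ f ∈ hermiteSet X p := by
  classical
  have hpn : ∀ q, p q + 1 ≤ n := by
    intro q
    by_contra h
    push_neg at h
    have h1 : Nat.choose (n + d) d ≤ Nat.choose (p q + d) d :=
      Nat.choose_le_choose d (by omega)
    have h2 : ∑ q', Nat.choose (p q' + d) d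
        = (∑ q' ∈ Finset.univ.erase q, Nat.choose (p q' + d) d) + Nat.choose (p q + d) d :=
      (Finset.sum_erase_add _ _ (Finset.mem_univ q)).symm
    have hne : (Finset.univ.erase q : Finset (Fin m)).Nonempty := by
      rw [← Finset.card_pos, Finset.card_erase_of_mem (Finset.mem_univ q), Finset.card_univ,
        Fintype.card_fin]
      omega
    obtain ⟨q', hq'⟩ := hne
    have h3 : 1 ≤ ∑ q' ∈ Finset.univ.erase q, Nat.choose (p q' + d) d := by
      refine le_trans ?_ (Finset.single_le_sum (fun i _ => Nat.zero_le _) hq')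
      exact Nat.choose_pos (by omega)
    omega
  have hsum : (∑ q, (p q + 1)) ≤ n * d := by
    rw [Finset.sum_add_distrib]
    simp only [Finset.sum_const, Finset.card_univ, Fintype.card_fin, smul_eq_mul, mul_one]
    omega
  obtain ⟨f, hf0, hfdeg, hfmem⟩ := key_lemma X n (fun q => p q + 1) hpn hsum
  refine ⟨f, hf0, hfdeg, ?_⟩
  intro q α hα
  have h1 := pderivPow_mem (X q) α (p q + 1) f (hfmem q)
  have h2 : (evalIdeal (X q)) ^ (p q + 1 - ∑ i, α i) ≤ (evalIdeal (X q)) ^ 1 :=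
    Ideal.pow_le_pow_right (by omega)
  have h3 : pderivPow α f ∈ evalIdeal (X q) := by
    have h4 := h2 h1; rwa [pow_one] at h4
  exact RingHom.mem_ker.mp h3
end

section
/- Let d ≥ 2 and 2 ≤ m ≤ d+1, let p_1,…,p_m be nonnegative integers, not all zero, and let n satisfy binom(n+d,d) = Σ_{q=1}^m binom(p_q+d,d). Then the Hermite interpolation scheme is singular: for every choice of pairwise distinct points X_1,…,X_m ∈ ℝ^d there exists a nonzero polynomial f of total degree at most n such that ∂^α f(X_q) = 0 for all 1 ≤ q ≤ m and all multi-indices α with |α| ≤ p_q. -/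
open MvPolynomial

namespace HermiteAux

variable {d : ℕ}

/-- The ideal of polynomials vanishing at `x`. -/
noncomputable def vIdeal (x : Fin d → ℝ) : Ideal (MvPolynomial (Fin d) ℝ) :=
  RingHom.ker (MvPolynomial.eval x)

lemma mem_vIdeal {x : Fin d → ℝ} {f : MvPolynomial (Fin d) ℝ} :
    f ∈ vIdeal x ↔ MvPolynomial.eval x f = 0 := RingHom.mem_ker

lemma pderiv_mem_pow (x : Fin d → ℝ) (i : Fin d) :
    ∀ k : ℕ, ∀ f ∈ (vIdeal x) ^ (k + 1), pderiv i f ∈ (vIdeal x) ^ k := by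
  intro k
  induction k with
  | zero =>
    intro f _
    simp [pow_zero, Ideal.one_eq_top]
  | succ k ih =>
    intro f hf
    rw [pow_succ] at hf
    refine Submodule.mul_induction_on hf ?_ ?_
    · intro a ha b hb
      rw [pderiv_mul]
      refine Ideal.add_mem _ ?_ ?_
      · rw [pow_succ]
        exact Ideal.mul_mem_mul (ih a ha) hb
      · exact Ideal.mul_mem_right _ _ ha
    · intro u v hu hv
      rw [map_add]
      exact Ideal.add_mem _ hu hv

lemma pow_pderiv_mem (x : Fin d → ℝ) (i : Fin d) :
    ∀ (j k : ℕ) (f : MvPolynomial (Fin d) ℝ), f ∈ (vIdeal x) ^ (j + k) →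
      (((pderiv i).toLinearMap : Module.End ℝ (MvPolynomial (Fin d) ℝ)) ^ j) f
        ∈ (vIdeal x) ^ k := by
  intro j
  induction j with
  | zero =>
    intro k f hf
    simpa using hf
  | succ j ih =>
    intro k f hf
    have hf' : f ∈ (vIdeal x) ^ ((j + k) + 1) := by
      rw [show (j + k) + 1 = j + 1 + k by omega]; exact hf
    have h1 : pderiv i f ∈ (vIdeal x) ^ (j + k) := pderiv_mem_pow x i _ f hf'
    have := ih k (pderiv i f) h1
    rw [pow_succ]
    simpa [Module.End.mul_apply] using this

lemma listprod_mem (x : Fin d → ℝ) :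
    ∀ (l : List (Fin d)) (β : Fin d → ℕ) (k : ℕ) (f : MvPolynomial (Fin d) ℝ),
      f ∈ (vIdeal x) ^ ((l.map β).sum + k) →
      ((l.map fun i => (((pderiv i).toLinearMap : Module.End ℝ (MvPolynomial (Fin d) ℝ)) ^ β i)).prod) f
        ∈ (vIdeal x) ^ k := by
  intro l
  induction l with
  | nil =>
    intro β k f hf
    simpa using hf
  | cons i t ih =>
    intro β k f hf
    rw [List.map_cons, List.prod_cons, Module.End.mul_apply]
    have hf' : f ∈ (vIdeal x) ^ ((t.map β).sum + (β i + k)) := by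
      rw [show (t.map β).sum + (β i + k) = ((i :: t).map β).sum + k by simp; omega]
      exact hf
    have h1 := ih β (β i + k) f hf'
    exact pow_pderiv_mem x i (β i) k _ h1

lemma eval_pderivPow_zero (x : Fin d → ℝ) (α : Fin d → ℕ) (pq : ℕ)
    (hα : (∑ i, α i) ≤ pq) (f : MvPolynomial (Fin d) ℝ)
    (hf : f ∈ (vIdeal x) ^ (pq + 1)) :
    MvPolynomial.eval x (pderivPow α f) = 0 := by
  have h1 : f ∈ (vIdeal x) ^ ((∑ i, α i) + 1) :=
    Ideal.pow_le_pow_right (by omega) hf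
  rw [Fin.sum_univ_def] at h1
  have h2 := listprod_mem x (List.finRange d) α 1 f h1
  rw [pow_one] at h2
  rw [← mem_vIdeal]
  exact h2

lemma prod_pow_mem (x : Fin d → ℝ) {ι : Type*} [DecidableEq ι] (s : Finset ι)
    (g : ι → MvPolynomial (Fin d) ℝ) (c : ι → ℕ)
    (h : ∀ q ∈ s, g q ∈ vIdeal x) :
    (∏ q ∈ s, g q ^ c q) ∈ (vIdeal x) ^ (∑ q ∈ s, c q) := by
  induction s using Finset.cons_induction with
  | empty => simp
  | cons a s ha ih =>
    rw [Finset.prod_cons, Finset.sum_cons, pow_add]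
    exact Ideal.mul_mem_mul (Ideal.pow_mem_pow (h a (Finset.mem_cons_self a s)) _)
      (ih fun q hq => h q (Finset.mem_cons_of_mem hq))

/-- A nonzero affine polynomial vanishing at `d` prescribed points of `ℝ^d`. -/
lemma exists_affine (Y : Fin d → (Fin d → ℝ)) :
    ∃ ℓ : MvPolynomial (Fin d) ℝ, ℓ ≠ 0 ∧ ℓ.totalDegree ≤ 1 ∧
      ∀ i, MvPolynomial.eval (Y i) ℓ = 0 := by
  classical
  set μ : Fin (d + 1) → (Fin d →₀ ℕ) :=
    Fin.cons 0 (fun i => Finsupp.single i 1) with hμdef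
  have hμinj : Function.Injective μ := by
    intro a b hab
    induction a using Fin.cases with
    | zero =>
      induction b using Fin.cases with
      | zero => rfl
      | succ j =>
        exfalso
        rw [hμdef] at hab
        simp only [Fin.cons_zero, Fin.cons_succ] at hab
        exact one_ne_zero (Finsupp.single_eq_zero.mp hab.symm)
    | succ i =>
      induction b using Fin.cases with
      | zero =>
        exfalso
        rw [hμdef] at hab
        simp only [Fin.cons_zero, Fin.cons_succ] at hab
        exact one_ne_zero (Finsupp.single_eq_zero.mp hab)
      | succ j =>
        rw [hμdef] at hab
        simp only [Fin.cons_succ] at hab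
        have := Finsupp.single_left_injective (one_ne_zero (α := ℕ)) hab
        rw [this]
  set M : Matrix (Fin d) (Fin (d + 1)) ℝ :=
    fun i j => MvPolynomial.eval (Y i) (monomial (μ j) (1 : ℝ)) with hMdef
  have hni : ¬ Function.Injective M.mulVecLin := by
    intro hinj
    have := LinearMap.finrank_le_finrank_of_injective hinj
    rw [Module.finrank_fin_fun, Module.finrank_fin_fun] at this
    omega
  rw [Function.not_injective_iff] at hni
  obtain ⟨u, w, huw, hneq⟩ := hni
  set v : Fin (d + 1) → ℝ := u - w with hvdef
  have hv0 : v ≠ 0 := sub_ne_zero.mpr hneq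
  have hMv : M.mulVec v = 0 := by
    have : M.mulVecLin v = 0 := by
      rw [hvdef, map_sub, huw, sub_self]
    simpa using this
  set ℓ : MvPolynomial (Fin d) ℝ := ∑ j, C (v j) * monomial (μ j) (1 : ℝ) with hldef
  have hcoeff : ∀ j0, coeff (μ j0) ℓ = v j0 := by
    intro j0
    rw [hldef, coeff_sum]
    have : ∀ j : Fin (d + 1),
        coeff (μ j0) (C (v j) * monomial (μ j) (1 : ℝ)) = if j = j0 then v j else 0 := by
      intro j
      rw [coeff_C_mul, coeff_monomial]
      by_cases h : j = j0
      · simp [h]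
      · have : μ j ≠ μ j0 := fun hc => h (hμinj hc)
        simp [h, this]
    rw [Finset.sum_congr rfl fun j _ => this j]
    simp
  refine ⟨ℓ, ?_, ?_, ?_⟩
  · intro h0
    obtain ⟨j0, hj0⟩ := Function.ne_iff.mp hv0
    have := hcoeff j0
    rw [h0] at this
    simp at this
    exact hj0 this.symm
  · rw [hldef]
    refine le_trans (totalDegree_finset_sum _ _) ?_
    refine Finset.sup_le fun j _ => ?_
    refine le_trans (totalDegree_mul _ _) ?_
    rw [totalDegree_C]
    rw [zero_add]
    induction j using Fin.cases with
    | zero =>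
      rw [hμdef]
      simp only [Fin.cons_zero]
      rw [show (monomial (0 : Fin d →₀ ℕ)) (1 : ℝ) = C 1 from rfl]
      simp
    | succ i =>
      rw [hμdef]
      simp only [Fin.cons_succ]
      rw [totalDegree_monomial _ (one_ne_zero)]
      simp [Finsupp.sum_single_index]
  · intro i
    have hMvi : (M.mulVec v) i = 0 := by rw [hMv]; rfl
    rw [hldef, map_sum]
    have : ∀ j : Fin (d + 1),
        MvPolynomial.eval (Y i) (C (v j) * monomial (μ j) (1 : ℝ)) = M i j * v j := by
      intro j
      rw [map_mul, eval_C, hMdef, mul_comm]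
    rw [Finset.sum_congr rfl fun j _ => this j]
    rw [← hMvi]
    simp [Matrix.mulVec, dotProduct]

/-- Selection lemma: split `n` into parts bounded by `b`. -/
lemma sel {m : ℕ} (b : Fin m → ℕ) :
    ∀ n : ℕ, n ≤ ∑ q, b q → ∃ c : Fin m → ℕ, (∀ q, c q ≤ b q) ∧ ∑ q, c q = n := by
  intro n
  induction n with
  | zero => exact fun _ => ⟨0, fun q => Nat.zero_le _, by simp⟩
  | succ n ih =>
    intro h
    obtain ⟨c, hc, hcs⟩ := ih (by omega)
    have hex : ∃ q0, c q0 < b q0 := by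
      by_contra hq
      push_neg at hq
      have : ∑ q, b q ≤ ∑ q, c q := Finset.sum_le_sum fun q _ => hq q
      omega
    obtain ⟨q0, hq0⟩ := hex
    refine ⟨Function.update c q0 (c q0 + 1), ?_, ?_⟩
    · intro q
      by_cases h' : q = q0
      · subst h'; rw [Function.update_self]; omega
      · rw [Function.update_of_ne h']; exact hc q
    · rw [Finset.sum_update_of_mem (Finset.mem_univ q0), ← Finset.erase_eq]
      have h2 : c q0 + ∑ x ∈ Finset.univ.erase q0, c x = n :=
        by rw [Finset.add_sum_erase _ _ (Finset.mem_univ q0)]; exact hcs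
      omega

lemma npos {m n : ℕ} (hm : 2 ≤ m) (_hd : 1 ≤ d) (p : Fin m → ℕ)
    (hdim : Nat.choose (n + d) d = ∑ q, Nat.choose (p q + d) d) :
    ∀ q, p q + 1 ≤ n := by
  intro q
  by_contra h
  have h1 : Nat.choose (n + d) d ≤ Nat.choose (p q + d) d :=
    Nat.choose_le_choose d (by omega)
  have h2 : Nat.choose (p q + d) d + 1 ≤ ∑ q', Nat.choose (p q' + d) d := by
    rw [← Finset.add_sum_erase _ _ (Finset.mem_univ q)]
    have hne : (Finset.univ.erase q).Nonempty := by
      rw [← Finset.card_pos, Finset.card_erase_of_mem (Finset.mem_univ q),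
        Finset.card_univ, Fintype.card_fin]
      omega
    obtain ⟨q', hq'⟩ := hne
    have h3 : 1 ≤ ∑ x ∈ Finset.univ.erase q, Nat.choose (p x + d) d := by
      calc 1 ≤ Nat.choose (p q' + d) d := Nat.choose_pos (by omega)
        _ ≤ _ := Finset.single_le_sum (f := fun x => Nat.choose (p x + d) d)
          (fun _ _ => Nat.zero_le _) hq'
    omega
  omega

/-- The key numerical lemma for `m = d + 1` nodes. -/
lemma sum_le {e n : ℕ} (p : Fin (e + 3) → ℕ) (hp : ∃ q, p q ≠ 0)
    (hpn : ∀ q, p q + 1 ≤ n)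
    (hdim : Nat.choose (n + (e + 2)) (e + 2) = ∑ q, Nat.choose (p q + (e + 2)) (e + 2)) :
    ∑ q, (p q + 1) ≤ (e + 2) * n := by
  classical
  set A : ℕ := Nat.choose (n + e + 1) (e + 1) with hA
  set B : ℕ := Nat.choose (n + (e + 2)) (e + 2) with hB
  set T : Fin (e + 3) → ℕ :=
    fun q => ∑ k ∈ Finset.Ico (p q) n, Nat.choose (k + (e + 2)) (e + 1) with hT
  -- telescoping identity
  have tel : ∀ a b : ℕ, a ≤ b →
      Nat.choose (a + (e + 2)) (e + 2)
        + ∑ k ∈ Finset.Ico a b, Nat.choose (k + (e + 2)) (e + 1)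
      = Nat.choose (b + (e + 2)) (e + 2) := by
    intro a b hab
    induction b, hab using Nat.le_induction with
    | base => simp
    | succ b hab ih =>
      rw [Finset.sum_Ico_succ_top hab, ← add_assoc, ih]
      have hps : Nat.choose ((b + (e + 2)) + 1) (e + 2)
          = Nat.choose (b + (e + 2)) (e + 1) + Nat.choose (b + (e + 2)) (e + 2) :=
        Nat.choose_succ_succ' (b + (e + 2)) (e + 1)
      have h1 : (b + 1) + (e + 2) = (b + (e + 2)) + 1 := by omega
      rw [h1, hps]
      omega
  have htelq : ∀ q, Nat.choose (p q + (e + 2)) (e + 2) + T q = B := by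
    intro q
    exact tel (p q) n (by have := hpn q; omega)
  -- sum of T
  have hTsum : ∑ q, T q = (e + 2) * B := by
    have h1 : ∑ q, (Nat.choose (p q + (e + 2)) (e + 2) + T q) = ∑ q : Fin (e + 3), B :=
      Finset.sum_congr rfl fun q _ => htelq q
    rw [Finset.sum_add_distrib, ← hdim] at h1
    rw [Finset.sum_const, Finset.card_univ, Fintype.card_fin, smul_eq_mul] at h1
    have h2 : (e + 3) * B = (e + 2) * B + B := by ring
    omega
  -- key identity (e+2)*B = (n+e+2)*A
  have hkey : (e + 2) * B = (n + e + 2) * A := by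
    have h : (n + e + 2) * Nat.choose (n + e + 1) (e + 1)
        = Nat.choose (n + e + 2) (e + 2) * (e + 2) :=
      Nat.add_one_mul_choose_eq (n + e + 1) (e + 1)
    have hB' : B = Nat.choose (n + e + 2) (e + 2) := hB
    rw [hA, hB']
    rw [mul_comm]
    exact h.symm
  have hApos : 1 ≤ A := Nat.choose_pos (by omega)
  -- per-q bound
  have hTle : ∀ q, T q ≤ (n - p q) * A := by
    intro q
    calc T q ≤ ∑ _k ∈ Finset.Ico (p q) n, A := by
          refine Finset.sum_le_sum fun k hk => ?_
          rw [hA]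
          refine Nat.choose_le_choose _ ?_
          have := (Finset.mem_Ico.mp hk).2
          omega
      _ = (n - p q) * A := by rw [Finset.sum_const, Nat.card_Ico, smul_eq_mul]
  by_cases hall : ∀ q, p q + 1 = n
  · exfalso
    have hTA : ∀ q, T q = A := by
      intro q
      have h1 : p q + 1 = n := hall q
      have h2 : T q = Nat.choose (p q + (e + 2)) (e + 1) := by
        simp only [hT]
        rw [← h1, Finset.sum_Ico_succ_top (le_refl _), Finset.Ico_self,
          Finset.sum_empty, zero_add]
      rw [h2, hA]
      congr 1
      omega
    have h2 : ∑ q, T q = (e + 3) * A := by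
      rw [Finset.sum_congr rfl fun q _ => hTA q]
      rw [Finset.sum_const, Finset.card_univ, Fintype.card_fin, smul_eq_mul]
    have h3 : (e + 3) * A = (n + e + 2) * A := by rw [← h2, hTsum, hkey]
    have h4 : e + 3 = n + e + 2 := Nat.eq_of_mul_eq_mul_right (by omega) h3
    have hn1 : n = 1 := by omega
    obtain ⟨q1, hq1⟩ := hp
    have := hpn q1
    omega
  · push_neg at hall
    obtain ⟨q0, hq0⟩ := hall
    have hq0' : p q0 + 2 ≤ n := by have := hpn q0; omega
    by_contra hS
    push_neg at hS
    -- improved bound at q0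
    have hTq0 : T q0 + Nat.choose (n + e) e ≤ (n - p q0) * A := by
      have hsplit : T q0 = Nat.choose (p q0 + (e + 2)) (e + 1)
          + ∑ k ∈ Finset.Ico (p q0 + 1) n, Nat.choose (k + (e + 2)) (e + 1) := by
        rw [hT]
        exact Finset.sum_eq_sum_Ico_succ_bot (by omega) _
      have h1 : Nat.choose (p q0 + (e + 2)) (e + 1) ≤ Nat.choose (n + e) (e + 1) :=
        Nat.choose_le_choose _ (by omega)
      have h2 : ∑ k ∈ Finset.Ico (p q0 + 1) n, Nat.choose (k + (e + 2)) (e + 1)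
          ≤ (n - (p q0 + 1)) * A := by
        calc _ ≤ ∑ _k ∈ Finset.Ico (p q0 + 1) n, A := by
              refine Finset.sum_le_sum fun k hk => ?_
              rw [hA]
              refine Nat.choose_le_choose _ ?_
              have := (Finset.mem_Ico.mp hk).2
              omega
          _ = _ := by rw [Finset.sum_const, Nat.card_Ico, smul_eq_mul]
      have hpascal : Nat.choose (n + e) e + Nat.choose (n + e) (e + 1) = A := by
        rw [hA]
        exact (Nat.choose_succ_succ' (n + e) e).symm
      have h3 : (n - p q0) = (n - (p q0 + 1)) + 1 := by omega
      rw [h3, add_mul, one_mul]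
      omega
    -- sum bound
    have hSum2 : ∑ q, T q + Nat.choose (n + e) e ≤ (∑ q, (n - p q)) * A := by
      rw [Finset.sum_mul]
      rw [← Finset.add_sum_erase _ T (Finset.mem_univ q0),
        ← Finset.add_sum_erase _ (fun q => (n - p q) * A) (Finset.mem_univ q0)]
      have h4 : ∑ q ∈ Finset.univ.erase q0, T q
          ≤ ∑ q ∈ Finset.univ.erase q0, (n - p q) * A :=
        Finset.sum_le_sum fun q _ => hTle q
      omega
    -- linear arithmetic to bound ∑ (n - p q)
    have hnp : ∑ q, ((n - p q) + p q) = ∑ q : Fin (e + 3), n :=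
      Finset.sum_congr rfl fun q _ => by have := hpn q; omega
    rw [Finset.sum_add_distrib, Finset.sum_const, Finset.card_univ,
      Fintype.card_fin, smul_eq_mul] at hnp
    have hpS : ∑ q, (p q + 1) = ∑ q, p q + (e + 3) := by
      rw [Finset.sum_add_distrib, Finset.sum_const, Finset.card_univ,
        Fintype.card_fin, smul_eq_mul, mul_one]
    have hmul : (e + 3) * n = (e + 2) * n + n := by ring
    have hnple : ∑ q, (n - p q) ≤ n + e + 2 := by omega
    have hfinal : (∑ q, (n - p q)) * A ≤ (n + e + 2) * A :=
      Nat.mul_le_mul_right _ hnple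
    have hcpos : 1 ≤ Nat.choose (n + e) e := Nat.choose_pos (by omega)
    omega

end HermiteAux

open HermiteAux in
/-- All true Hermite interpolation schemes of type total degree on `2 ≤ m ≤ d+1` nodes in
`ℝ^d`, `d ≥ 2`, are singular. -/
theorem singular_of_m_le_d_add_one {d m n : ℕ} (hd : 2 ≤ d) (hm : 2 ≤ m) (hmd : m ≤ d + 1)
    (p : Fin m → ℕ) (hp : ∃ q, p q ≠ 0)
    (hdim : Nat.choose (n + d) d = ∑ q, Nat.choose (p q + d) d)
    (X : Fin m → (Fin d → ℝ)) (hX : Function.Injective X) :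
    ∃ f : MvPolynomial (Fin d) ℝ, f ≠ 0 ∧ f.totalDegree ≤ n ∧ f ∈ hermiteSet X p := by
  classical
  have hpn : ∀ q, p q + 1 ≤ n := npos hm (by omega) p hdim
  by_cases hcase : m ≤ d
  · -- one hyperplane through all the nodes
    obtain ⟨ℓ, hl0, hld, hlv⟩ :=
      exists_affine (fun i : Fin d => X ⟨i.val % m, Nat.mod_lt _ (by omega)⟩)
    refine ⟨ℓ ^ n, pow_ne_zero _ hl0, ?_, ?_⟩
    · calc (ℓ ^ n).totalDegree ≤ n * ℓ.totalDegree := totalDegree_pow _ _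
        _ ≤ n * 1 := Nat.mul_le_mul_left _ hld
        _ = n := mul_one n
    · intro q α hα
      apply eval_pderivPow_zero (X q) α (p q) hα
      have hlq : ℓ ∈ vIdeal (X q) := by
        rw [mem_vIdeal]
        have h1 := hlv ⟨q.val, lt_of_lt_of_le q.isLt hcase⟩
        have h2 : X ⟨(⟨q.val, lt_of_lt_of_le q.isLt hcase⟩ : Fin d).val % m,
            Nat.mod_lt _ (by omega)⟩ = X q := by
          simp [Nat.mod_eq_of_lt q.isLt]
        rw [h2] at h1
        exact h1
      exact Ideal.pow_le_pow_right (hpn q) (Ideal.pow_mem_pow hlq n)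
  · -- m = d + 1
    have hm' : m = d + 1 := by omega
    subst hm'
    have hl : ∀ q : Fin (d + 1), ∃ ℓ : MvPolynomial (Fin d) ℝ,
        ℓ ≠ 0 ∧ ℓ.totalDegree ≤ 1 ∧ ∀ r, r ≠ q → MvPolynomial.eval (X r) ℓ = 0 := by
      intro q
      obtain ⟨ℓ, h0, h1, h2⟩ := exists_affine (fun i => X (q.succAbove i))
      refine ⟨ℓ, h0, h1, fun r hr => ?_⟩
      obtain ⟨i, hi⟩ := Fin.exists_succAbove_eq hr
      rw [← hi]
      exact h2 i
    choose ℓ hl0 hld hlv using hl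
    obtain ⟨e, rfl⟩ : ∃ e, d = e + 2 := ⟨d - 2, by omega⟩
    have hsum : ∑ q, (p q + 1) ≤ (e + 2) * n := sum_le p hp hpn hdim
    have hb : n ≤ ∑ q, (n - (p q + 1)) := by
      have h1 : ∑ q, ((n - (p q + 1)) + (p q + 1)) = ∑ q : Fin (e + 3), n :=
        Finset.sum_congr rfl fun q _ => by have := hpn q; omega
      rw [Finset.sum_add_distrib, Finset.sum_const, Finset.card_univ,
        Fintype.card_fin, smul_eq_mul] at h1
      have h2 : (e + 3) * n = (e + 2) * n + n := by ring
      omega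
    obtain ⟨c, hcb, hcs⟩ := sel _ n hb
    refine ⟨∏ q, ℓ q ^ c q, ?_, ?_, ?_⟩
    · rw [Finset.prod_ne_zero_iff]
      exact fun q _ => pow_ne_zero _ (hl0 q)
    · calc (∏ q, ℓ q ^ c q).totalDegree ≤ ∑ q, (ℓ q ^ c q).totalDegree :=
          totalDegree_finset_prod _ _
        _ ≤ ∑ q, c q := Finset.sum_le_sum fun q _ =>
            le_trans (totalDegree_pow _ _) (by
              have := hld q
              calc c q * (ℓ q).totalDegree ≤ c q * 1 := Nat.mul_le_mul_left _ this
                _ = c q := mul_one _)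
        _ = n := hcs
    · intro r α hα
      apply eval_pderivPow_zero (X r) α (p r) hα
      have hsplit : ∏ q, ℓ q ^ c q
          = ℓ r ^ c r * ∏ q ∈ Finset.univ.erase r, ℓ q ^ c q :=
        (Finset.mul_prod_erase _ _ (Finset.mem_univ r)).symm
      rw [hsplit]
      have hmem : (∏ q ∈ Finset.univ.erase r, ℓ q ^ c q)
          ∈ (vIdeal (X r)) ^ (∑ q ∈ Finset.univ.erase r, c q) := by
        refine prod_pow_mem _ _ _ _ fun q hq => ?_
        rw [mem_vIdeal]
        exact hlv q r (Ne.symm (Finset.ne_of_mem_erase hq))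
      have hge : p r + 1 ≤ ∑ q ∈ Finset.univ.erase r, c q := by
        have h2 : c r + ∑ q ∈ Finset.univ.erase r, c q = n := by
          rw [Finset.add_sum_erase _ _ (Finset.mem_univ r)]; exact hcs
        have h3 := hcb r
        have h4 := hpn r
        omega
      exact Ideal.mul_mem_left _ _ (Ideal.pow_le_pow_right hge hmem)
end

section
/- Let p_1 ≤ p_2 ≤ p_3 ≤ p_4 be nonnegative integers satisfying either (i) p_1 = p_2 = p_3 and p_4 ≥ p_1 + 2, or (ii) p_2 = p_3 = p_4 and p_4 ≥ p_1 + 2, and let n satisfy binom(n+2,2) = Σ_{i=1}^4 binom(p_i+2,2). Then the Hermite interpolation scheme on 4 nodes in ℝ² is singular: for every choice of pairwise distinct points X_1, X_2, X_3, X_4 ∈ ℝ² there exists a nonzero polynomial f in two variables of total degree at most n such that ∂^α f(X_q) = 0 for all 1 ≤ q ≤ 4 and all multi-indices α ∈ ℕ² with |α| ≤ p_q. -/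
open MvPolynomial

/-!
Let `L` be a nonzero affine function vanishing at `X 2` and `X 3`, and let `g ≠ 0` have degree
`≤ n - 1` and vanish to orders `p 0 + 1`, `p 1 + 1`, `p 2`, `p 3` at the four nodes (derivatives up
to orders `p 0`, `p 1`, `p 2 - 1`, `p 3 - 1`). By the Leibniz rule `L * g` is the required
polynomial. Both `L` and `g` exist because they are subject to fewer linear conditions than the
dimension `binom(N + 2, 2)` of `Π_N^2`; for `g` this amounts to `n ≤ p 2 + p 3`, which the
hypotheses give through `∑ binom(p q + 2, 2) < binom(p 2 + p 3 + 3, 2)`.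
-/
namespace MvPolynomial

theorem pderiv_pderiv_comm {σ R : Type*} [CommRing R] (i j : σ) (f : MvPolynomial σ R) :
    pderiv i (pderiv j f) = pderiv j (pderiv i f) := by
  have h : ⁅pderiv i, pderiv j⁆ = (0 : Derivation R (MvPolynomial σ R) (MvPolynomial σ R)) :=
    derivation_ext fun k => by
      rw [Derivation.commutator_apply]
      classical simp only [pderiv_X, Pi.single_apply]
      split_ifs <;> simp
  simpa [Derivation.commutator_apply, sub_eq_zero] using congr($h f)

end MvPolynomial

open Finset

section

variable {d : ℕ}

theorem commute_pderiv (i j : Fin d) :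
    Commute (pderiv i : Derivation ℝ (MvPolynomial (Fin d) ℝ) _).toLinearMap
      (pderiv j).toLinearMap :=
  LinearMap.ext fun f => pderiv_pderiv_comm i j f

theorem pairwise_commute_pderiv_pow (α : Fin d → ℕ) :
    ((univ : Finset (Fin d)) : Set (Fin d)).Pairwise
      (Function.onFun Commute fun i =>
        (pderiv i : Derivation ℝ (MvPolynomial (Fin d) ℝ) _).toLinearMap ^ α i) :=
  fun i _ j _ _ => (commute_pderiv i j).pow_pow _ _

theorem pderivPow_eq_noncommProd (α : Fin d → ℕ) :
    pderivPow α = univ.noncommProd _ (pairwise_commute_pderiv_pow α) := by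
  simp only [pderivPow, noncommProd, Fin.univ_val_map, Multiset.noncommProd_coe, List.ofFn_eq_map]

theorem pderivPow_add (α β : Fin d → ℕ) : pderivPow (α + β) = pderivPow α * pderivPow β := by
  simp only [pderivPow_eq_noncommProd, Pi.add_apply, pow_add]
  exact noncommProd_mul_distrib _ _ _ _ fun i _ j _ _ => (commute_pderiv i j).pow_pow _ _

theorem pderivPow_zero : pderivPow (0 : Fin d → ℕ) = 1 := by
  simp [pderivPow]

theorem pderivPow_single (i : Fin d) : pderivPow (Pi.single i 1) = (pderiv i).toLinearMap := by
  classical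
  rw [pderivPow, List.prod_map_eq_pow_single i _ fun j hj _ => by simp [hj],
    List.count_eq_one_of_mem (List.nodup_finRange d) (List.mem_finRange i)]
  simp

theorem pderivPow_add_single_apply (α : Fin d → ℕ) (i : Fin d) (f : MvPolynomial (Fin d) ℝ) :
    pderivPow (α + Pi.single i 1) f = pderivPow α (pderiv i f) := by
  rw [pderivPow_add, pderivPow_single, Module.End.mul_apply]
  rfl

/-- Order `p + 1` is the Hermite condition of order `p` (derivatives of order `≤ p` vanish);
order `0` imposes nothing. -/
def VanishesToOrder (f : MvPolynomial (Fin d) ℝ) (x : Fin d → ℝ) (k : ℕ) : Prop :=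
  ∀ α : Fin d → ℕ, ∑ i, α i < k → eval x (pderivPow α f) = 0

namespace VanishesToOrder

variable {f g : MvPolynomial (Fin d) ℝ} {x : Fin d → ℝ} {k l : ℕ}

theorem eval_eq_zero (hf : VanishesToOrder f x k) (hk : 0 < k) : eval x f = 0 := by
  simpa [pderivPow_zero] using hf 0 (by simpa using hk)

theorem pderiv (hf : VanishesToOrder f x k) (i : Fin d) : VanishesToOrder (pderiv i f) x (k - 1) := by
  intro α hα
  rw [← pderivPow_add_single_apply]
  refine hf _ ?_
  simp only [Pi.add_apply, sum_add_distrib, sum_pi_single', mem_univ, ↓reduceIte]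
  omega

theorem mul (hf : VanishesToOrder f x k) (hg : VanishesToOrder g x l) :
    VanishesToOrder (f * g) x (k + l) := by
  intro α hα
  induction hs : ∑ i, α i generalizing α f g k l with
  | zero =>
    obtain rfl : α = 0 := funext fun i => sum_eq_zero_iff.mp hs i (mem_univ i)
    rw [pderivPow_zero, Module.End.one_apply, eval_mul]
    rcases Nat.eq_zero_or_pos k with rfl | hk
    · rw [hg.eval_eq_zero (by omega), mul_zero]
    · rw [hf.eval_eq_zero hk, zero_mul]
  | succ s ih =>
    obtain ⟨i, hi⟩ : ∃ i, α i ≠ 0 := by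
      by_contra! h
      simp [h] at hs
    obtain ⟨β, rfl⟩ : ∃ β, α = β + Pi.single i 1 := ⟨α - Pi.single i 1, funext fun j => by
      by_cases hj : j = i
      · subst hj
        simp only [Pi.add_apply, Pi.sub_apply, Pi.single_eq_same]
        omega
      · simp [hj]⟩
    simp only [Pi.add_apply, sum_add_distrib, Pi.single_apply, sum_ite_eq', mem_univ, if_true,
      Nat.add_right_cancel_iff] at hs hα
    rw [pderivPow_add_single_apply, pderiv_mul, map_add, map_add,
      ih (hf.pderiv i) hg β (by omega) hs, ih hf (hg.pderiv i) β (by omega) hs, add_zero]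

end VanishesToOrder

def multiIndicesBelow (d k : ℕ) : Finset (Fin d → ℕ) :=
  (range k).biUnion (Nat.antidiagonalTuple d)

theorem mem_multiIndicesBelow {k : ℕ} {α : Fin d → ℕ} :
    α ∈ multiIndicesBelow d k ↔ ∑ i, α i < k := by
  simp [multiIndicesBelow, Nat.mem_antidiagonalTuple]

theorem card_multiIndicesBelow_two (k : ℕ) : #(multiIndicesBelow 2 k) = (k + 1).choose 2 := by
  rw [multiIndicesBelow, card_biUnion fun i _ j _ hij => disjoint_left.mpr fun α hi hj =>
    hij ((Nat.mem_antidiagonalTuple.mp hi).symm.trans (Nat.mem_antidiagonalTuple.mp hj))]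
  simp only [Nat.antidiagonalTuple_two, card_map, Nat.card_antidiagonal]
  induction k with
  | zero => simp
  | succ k ih =>
    rw [sum_range_succ, ih, Nat.choose_succ_succ (k + 1) 1, Nat.choose_one_right]
    ring

theorem exists_ne_zero_totalDegree_le_vanishesToOrder {ι : Type*} [Fintype ι]
    (X : ι → Fin d → ℝ) (r : ι → ℕ) (N : ℕ)
    (hcount : ∑ q, #(multiIndicesBelow d (r q)) < #(multiIndicesBelow d (N + 1))) :
    ∃ g : MvPolynomial (Fin d) ℝ,
      g ≠ 0 ∧ g.totalDegree ≤ N ∧ ∀ q, VanishesToOrder g (X q) (r q) := by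
  classical
  let S := multiIndicesBelow d (N + 1)
  let monomialOf : S → MvPolynomial (Fin d) ℝ := fun α =>
    monomial (Finsupp.equivFunOnFinite.symm α.1) 1
  let P := Fintype.linearCombination ℝ monomialOf
  have hP : Function.Injective P :=
    ((basisMonomials (Fin d) ℝ).linearIndependent.comp _
      (Finsupp.equivFunOnFinite.symm.injective.comp
        Subtype.val_injective)).fintypeLinearCombination_injective
  let Φ : (S → ℝ) →ₗ[ℝ] ((Σ q, multiIndicesBelow d (r q)) → ℝ) := LinearMap.pi fun c =>
    (aeval (X c.1)).toLinearMap ∘ₗ pderivPow c.2.1 ∘ₗ P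
  obtain ⟨c, hc, hc0⟩ := Submodule.exists_mem_ne_zero_of_ne_bot
    (LinearMap.ker_ne_bot_of_finrank_lt (f := Φ) (by simpa [Fintype.card_sigma] using hcount))
  refine ⟨P c, fun h => hc0 (hP (h.trans (map_zero P).symm)), ?_, fun q α hα => ?_⟩
  · refine (totalDegree_finsetSum _ _).trans (Finset.sup_le fun α _ => ?_)
    refine (totalDegree_smul_le _ _).trans ((totalDegree_monomial_le _ _).trans ?_)
    have := mem_multiIndicesBelow.mp α.2
    simp only [id_eq, implies_true, Finsupp.sum_fintype, Finsupp.equivFunOnFinite_symm_apply_apply]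
    omega
  · simpa [Φ] using congrFun hc ⟨q, α, mem_multiIndicesBelow.mpr hα⟩

theorem add_two_choose_two_mul_two (m : ℕ) : (m + 2).choose 2 * 2 = (m + 2) * (m + 1) := by
  simpa using (Nat.add_one_mul_choose_eq (m + 1) 1).symm

theorem sum_choose_two_lt_of_equal_orders {a b c e : ℕ}
    (hcase : (a = b ∧ b = c ∧ a + 2 ≤ e) ∨ (b = c ∧ c = e ∧ a + 2 ≤ e)) :
    (a + 2).choose 2 + (b + 2).choose 2 + (c + 2).choose 2 + (e + 2).choose 2 <
      (c + e + 3).choose 2 := by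
  have ha := add_two_choose_two_mul_two a
  have hc := add_two_choose_two_mul_two c
  have he := add_two_choose_two_mul_two e
  have hce := add_two_choose_two_mul_two (c + e + 1)
  rcases hcase with ⟨rfl, rfl, h⟩ | ⟨rfl, rfl, h⟩ <;> nlinarith

theorem count_lt_of_equal_orders {n a b c e : ℕ}
    (hcase : (a = b ∧ b = c ∧ a + 2 ≤ e) ∨ (b = c ∧ c = e ∧ a + 2 ≤ e))
    (hdim : (n + 2).choose 2 = (a + 2).choose 2 + (b + 2).choose 2 + (c + 2).choose 2 +
      (e + 2).choose 2) :
    n ≠ 0 ∧ (a + 2).choose 2 + (b + 2).choose 2 + (c + 1).choose 2 + (e + 1).choose 2 <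
      (n + 1).choose 2 := by
  have hlt := sum_choose_two_lt_of_equal_orders hcase
  have hn : n ≤ c + e := by
    by_contra! h
    have := Nat.choose_le_choose 2 (show c + e + 3 ≤ n + 2 by omega)
    omega
  have pascal (m : ℕ) : (m + 2).choose 2 = (m + 1).choose 2 + (m + 1) := by
    rw [Nat.choose_succ_succ' (m + 1) 1, Nat.choose_one_right, add_comm]
  have := pascal a
  have := pascal b
  have := pascal c
  have := pascal e
  refine ⟨fun hn0 => ?_, by have := pascal n; omega⟩
  simp only [hn0, zero_add, Nat.choose_self] at hdim
  omega

theorem mem_hermiteSet_iff {m : ℕ} {X : Fin m → Fin d → ℝ} {p : Fin m → ℕ}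
    {f : MvPolynomial (Fin d) ℝ} :
    f ∈ hermiteSet X p ↔ ∀ q, VanishesToOrder f (X q) (p q + 1) := by
  simp only [hermiteSet, Set.mem_ofPred_eq, VanishesToOrder, Nat.lt_succ_iff]

end

theorem singular_four_nodes_equal_orders_general {n : ℕ} (p : Fin 4 → ℕ)
    (hcase : (p 0 = p 1 ∧ p 1 = p 2 ∧ p 0 + 2 ≤ p 3) ∨
             (p 1 = p 2 ∧ p 2 = p 3 ∧ p 0 + 2 ≤ p 3))
    (hdim : Nat.choose (n + 2) 2 = ∑ q, Nat.choose (p q + 2) 2)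
    (X : Fin 4 → (Fin 2 → ℝ)) :
    ∃ f : MvPolynomial (Fin 2) ℝ, f ≠ 0 ∧ f.totalDegree ≤ n ∧ f ∈ hermiteSet X p := by
  rw [Fin.sum_univ_four] at hdim
  obtain ⟨hn, hcount⟩ := count_lt_of_equal_orders hcase hdim
  obtain ⟨N, rfl⟩ := Nat.exists_eq_add_one_of_ne_zero hn
  obtain ⟨L, hL, hLdeg, hLvan⟩ := exists_ne_zero_totalDegree_le_vanishesToOrder X ![0, 0, 1, 1] 1
    (by simp [card_multiIndicesBelow_two, Fin.sum_univ_four])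
  obtain ⟨g, hg, hgdeg, hgvan⟩ := exists_ne_zero_totalDegree_le_vanishesToOrder X
    ![p 0 + 1, p 1 + 1, p 2, p 3] N
    (by simpa [card_multiIndicesBelow_two, Fin.sum_univ_four] using hcount)
  refine ⟨L * g, mul_ne_zero hL hg, (totalDegree_mul L g).trans (by omega),
    mem_hermiteSet_iff.mpr fun q => ?_⟩
  have hLg := (hLvan q).mul (hgvan q)
  fin_cases q <;> simpa [add_comm] using hLg

/-- Hermite interpolation on 4 nodes in `ℝ²` with `p_1 = p_2 = p_3`, `p_4 ≥ p_1 + 2` or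
`p_2 = p_3 = p_4`, `p_4 ≥ p_1 + 2` is singular. -/
theorem singular_four_nodes_equal_orders {n : ℕ} (p : Fin 4 → ℕ) (hmono : Monotone p)
    (hcase : (p 0 = p 1 ∧ p 1 = p 2 ∧ p 0 + 2 ≤ p 3) ∨
             (p 1 = p 2 ∧ p 2 = p 3 ∧ p 0 + 2 ≤ p 3))
    (hdim : Nat.choose (n + 2) 2 = ∑ q, Nat.choose (p q + 2) 2)
    (X : Fin 4 → (Fin 2 → ℝ)) (hX : Function.Injective X) :
    ∃ f : MvPolynomial (Fin 2) ℝ, f ≠ 0 ∧ f.totalDegree ≤ n ∧ f ∈ hermiteSet X p :=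
  singular_four_nodes_equal_orders_general p hcase hdim X
end

section
/- Let p_1 ≤ p_2 ≤ p_3 ≤ p_4 ≤ p_5 be nonnegative integers with p_2 + 1 = p_3 = p_4 = p_5, and suppose n satisfies binom(n+2,2) = Σ_{i=1}^5 binom(p_i+2,2). Then the Hermite interpolation scheme on 5 nodes in ℝ² is singular: for every choice of pairwise distinct points X_1, …, X_5 ∈ ℝ², the interpolation problem on Π_n^2 is not regular, i.e., there exists a nonzero polynomial f in two variables of total degree at most n such that ∂^α f(X_q) = 0 for all 1 ≤ q ≤ 5 and all multi-indices α ∈ ℕ² with |α| ≤ p_q. -/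
open MvPolynomial

/-- There is a nonzero conic through any 5 points of the plane. -/
lemma exists_conic (X : Fin 5 → (Fin 2 → ℝ)) :
    ∃ Q : MvPolynomial (Fin 2) ℝ, Q ≠ 0 ∧ Q.totalDegree ≤ 2 ∧
      ∀ q, MvPolynomial.eval (X q) Q = 0 := by
  classical
  set E : Fin 6 → (Fin 2 → ℕ) := ![![0,0],![1,0],![0,1],![2,0],![1,1],![0,2]] with hE
  have hEinj : Function.Injective E := by decide
  set e : Fin 6 → (Fin 2 →₀ ℕ) := fun j => Finsupp.equivFunOnFinite.symm (E j) with he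
  have heinj : Function.Injective e := Finsupp.equivFunOnFinite.symm.injective.comp hEinj
  have hdeg : ∀ j, ((e j).sum fun _ m => m) ≤ 2 := by
    intro j
    rw [he, Finsupp.sum_fintype _ _ (fun _ => rfl)]
    revert j; decide
  set P : (Fin 6 → ℝ) →ₗ[ℝ] MvPolynomial (Fin 2) ℝ :=
    ∑ j : Fin 6, (MvPolynomial.monomial (e j)).comp (LinearMap.proj j) with hP
  have hPcoeff : ∀ c j, MvPolynomial.coeff (e j) (P c) = c j := by
    intro c j
    rw [hP]
    simp only [LinearMap.sum_apply, LinearMap.comp_apply, LinearMap.proj_apply,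
      MvPolynomial.coeff_sum, MvPolynomial.coeff_monomial]
    rw [Finset.sum_eq_single j] <;> simp +contextual [heinj.eq_iff, eq_comm]
  have hPdeg : ∀ c, (P c).totalDegree ≤ 2 := by
    intro c
    rw [hP]
    simp only [LinearMap.sum_apply, LinearMap.comp_apply, LinearMap.proj_apply]
    refine le_trans (MvPolynomial.totalDegree_finset_sum _ _) (Finset.sup_le fun j _ => ?_)
    exact le_trans (MvPolynomial.totalDegree_monomial_le _ _) (hdeg j)
  -- the evaluation map
  set Φ : (Fin 6 → ℝ) →ₗ[ℝ] (Fin 5 → ℝ) :=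
    (LinearMap.pi fun q => (MvPolynomial.aeval (X q)).toLinearMap).comp P with hΦ
  have hnotinj : ¬ Function.Injective Φ := by
    intro h
    have := LinearMap.finrank_le_finrank_of_injective h
    simp [Module.finrank_fin_fun] at this
  rw [Function.not_injective_iff] at hnotinj
  obtain ⟨a, b, hab, hne⟩ := hnotinj
  refine ⟨P (a - b), ?_, hPdeg _, ?_⟩
  · intro h0
    apply hne
    funext j
    have := hPcoeff (a - b) j
    rw [h0] at this
    simpa [sub_eq_zero] using this.symm
  · intro q
    have : Φ (a - b) = 0 := by rw [map_sub, hab, sub_self]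
    have := congrFun this q
    simpa [hΦ] using this

lemma pderiv_pow_mul (i : Fin 2) (Q g : MvPolynomial (Fin 2) ℝ) (m : ℕ) :
    ∃ g', MvPolynomial.pderiv i (Q ^ (m + 1) * g) = Q ^ m * g' := by
  refine ⟨(m+1 : ℕ) * MvPolynomial.pderiv i Q * g + Q * MvPolynomial.pderiv i g, ?_⟩
  have h1 : MvPolynomial.pderiv i (Q ^ (m+1)) = (m+1 : ℕ) • Q ^ m • MvPolynomial.pderiv i Q :=
    by simpa using Derivation.leibniz_pow (MvPolynomial.pderiv i) (m+1)
  rw [MvPolynomial.pderiv_mul, h1]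
  simp only [smul_eq_mul, nsmul_eq_mul]
  ring

lemma pderiv_iter_pow (i : Fin 2) (Q : MvPolynomial (Fin 2) ℝ) :
    ∀ (t m : ℕ) (g : MvPolynomial (Fin 2) ℝ), ∃ g',
      (((MvPolynomial.pderiv i).toLinearMap ^ t) (Q ^ (m + t) * g)) = Q ^ m * g' := by
  intro t
  induction t with
  | zero => exact fun m g => ⟨g, rfl⟩
  | succ t ih =>
    intro m g
    obtain ⟨g₁, hg₁⟩ := pderiv_pow_mul i Q g (m + t)
    obtain ⟨g₂, hg₂⟩ := ih m g₁
    refine ⟨g₂, ?_⟩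
    rw [pow_succ, Module.End.mul_apply]
    have : (MvPolynomial.pderiv i).toLinearMap (Q ^ (m + (t+1)) * g) = Q ^ (m + t) * g₁ := by
      simpa [show m + (t+1) = (m+t)+1 by ring] using hg₁
    rw [this, hg₂]

lemma two_mul_choose_two (k : ℕ) : 2 * Nat.choose (k + 2) 2 = (k + 2) * (k + 1) := by
  induction k with
  | zero => rfl
  | succ k ih =>
    have h : Nat.choose (k + 3) 2 = Nat.choose (k + 2) 2 + (k + 2) := by
      rw [show k + 3 = (k+2) + 1 from rfl, Nat.choose_succ_succ (k+2) 1, Nat.choose_one_right]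
      ring_nf
    rw [show k + 1 + 2 = k + 3 from rfl, h]
    nlinarith [ih]

/-- Hermite interpolation on 5 nodes in `ℝ²` with `p_2 + 1 = p_3 = p_4 = p_5` is singular. -/
theorem singular_five_nodes_case_i {n : ℕ} (p : Fin 5 → ℕ) (hmono : Monotone p)
    (hcase : p 1 + 1 = p 2 ∧ p 2 = p 3 ∧ p 3 = p 4)
    (hdim : Nat.choose (n + 2) 2 = ∑ q, Nat.choose (p q + 2) 2)
    (X : Fin 5 → (Fin 2 → ℝ)) (hX : Function.Injective X) :
    ∃ f : MvPolynomial (Fin 2) ℝ, f ≠ 0 ∧ f.totalDegree ≤ n ∧ f ∈ hermiteSet X p := by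
  obtain ⟨h12, h23, h34⟩ := hcase
  -- degree bound : n ≥ 2 * p 1 + 4
  have hn : 2 * p 1 + 4 ≤ n := by
    have hsum : ∑ q, Nat.choose (p q + 2) 2
        = Nat.choose (p 0 + 2) 2 + Nat.choose (p 1 + 2) 2 + 3 * Nat.choose (p 1 + 3) 2 := by
      rw [Fin.sum_univ_five, ← h34, ← h23, ← h12]
      ring
    have key : 2 * Nat.choose (n+2) 2 = 2 * Nat.choose (p 0 + 2) 2
        + 2 * Nat.choose (p 1 + 2) 2 + 3 * (2 * Nat.choose ((p 1 + 1) + 2) 2) := by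
      rw [hdim, hsum]; ring_nf
    rw [two_mul_choose_two, two_mul_choose_two, two_mul_choose_two, two_mul_choose_two] at key
    have ha : 2 ≤ (p 0 + 2) * (p 0 + 1) := by nlinarith [Nat.zero_le (p 0)]
    by_contra h
    push_neg at h
    have h1 : (n+2)*(n+1) ≤ (2*(p 1)+5)*(2*(p 1)+4) := Nat.mul_le_mul (by omega) (by omega)
    nlinarith [key, h1, ha]
  -- orders are all at most p 1 + 1
  have hple : ∀ q, p q ≤ p 1 + 1 := by
    intro q
    have : p q ≤ p 4 := hmono (Fin.le_last q)
    omega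
  obtain ⟨Q, hQ0, hQdeg, hQvan⟩ := exists_conic X
  refine ⟨Q ^ (p 1 + 2), pow_ne_zero _ hQ0, ?_, ?_⟩
  · calc (Q ^ (p 1 + 2)).totalDegree ≤ (p 1 + 2) * Q.totalDegree :=
          MvPolynomial.totalDegree_pow _ _
      _ ≤ (p 1 + 2) * 2 := Nat.mul_le_mul_left _ hQdeg
      _ ≤ n := by omega
  · intro q α hα
    rw [Fin.sum_univ_two] at hα
    have hαle : α 0 + α 1 + 1 ≤ p 1 + 2 := by have := hple q; omega
    set m₂ : ℕ := p 1 + 2 - α 0 - α 1 with hm₂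
    have hm₂pos : 1 ≤ m₂ := by omega
    -- unfold pderivPow for d = 2
    have hpp : ∀ f : MvPolynomial (Fin 2) ℝ, pderivPow α f
        = ((MvPolynomial.pderiv (0 : Fin 2)).toLinearMap ^ α 0)
          (((MvPolynomial.pderiv (1 : Fin 2)).toLinearMap ^ α 1) f) := by
      intro f
      simp [pderivPow, List.finRange, Module.End.mul_apply]
    obtain ⟨g₁, hg₁⟩ := pderiv_iter_pow 1 Q (α 1) (m₂ + α 0) 1
    obtain ⟨g₂, hg₂⟩ := pderiv_iter_pow 0 Q (α 0) m₂ g₁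
    have hQk : Q ^ (p 1 + 2) = Q ^ (m₂ + α 0 + α 1) * 1 := by
      rw [mul_one]
      congr 1
      omega
    rw [hpp, hQk, hg₁, hg₂, map_mul, map_pow, hQvan q]
    rw [zero_pow (by omega), zero_mul]
end

section
/- Let X_1, …, X_5 be pairwise distinct points in ℝ², let p_1, …, p_5 be nonnegative integers, and suppose the Hermite interpolation problem is regular on Π_n^2: for every family of values c_{q,α} (1 ≤ q ≤ 5, |α| ≤ p_q) there exists a unique f ∈ Π_n^2 with ∂^α f(X_q) = c_{q,α}. Then n ≤ 2·max(p_1,…,p_5) + 1 (equivalently n < 2·max_i p_i + 2). -/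
open MvPolynomial

namespace HermiteAux

lemma pderivPow_apply (α : Fin 2 → ℕ) (f : MvPolynomial (Fin 2) ℝ) :
    pderivPow α f = ((pderiv (0:Fin 2)).toLinearMap ^ α 0)
      (((pderiv (1:Fin 2)).toLinearMap ^ α 1) f) := by
  simp [pderivPow, List.finRange]

lemma dvd_pderiv {Q f : MvPolynomial (Fin 2) ℝ} {j : ℕ} (h : Q ^ (j + 1) ∣ f) (i : Fin 2) :
    Q ^ j ∣ pderiv i f := by
  obtain ⟨g, rfl⟩ := h
  rw [Derivation.leibniz]
  apply dvd_add
  · rw [smul_eq_mul]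
    exact dvd_mul_of_dvd_left (pow_dvd_pow Q (Nat.le_succ j)) _
  · rw [smul_eq_mul]
    have hp : pderiv i (Q ^ (j + 1)) = (j + 1) • (Q ^ j * pderiv i Q) := by
      have := Derivation.leibniz_pow (pderiv i) (a := Q) (n := j + 1)
      simpa using this
    rw [hp, nsmul_eq_mul]
    exact dvd_mul_of_dvd_right (dvd_mul_of_dvd_right (dvd_mul_right _ _) _) _

lemma dvd_pderiv_iter {Q : MvPolynomial (Fin 2) ℝ} (i : Fin 2) (a : ℕ) :
    ∀ j : ℕ, ∀ f : MvPolynomial (Fin 2) ℝ, Q ^ (j + a) ∣ f →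
      Q ^ j ∣ ((pderiv i).toLinearMap ^ a) f := by
  induction a with
  | zero => intro j f h; simpa using h
  | succ a ih =>
      intro j f h
      rw [pow_succ, Module.End.mul_apply]
      refine ih j _ ?_
      have h' : Q ^ (j + a + 1) ∣ f := by
        have : j + (a + 1) = j + a + 1 := by omega
        rwa [this] at h
      simpa using dvd_pderiv h' i

lemma dvd_pderivPow {Q f : MvPolynomial (Fin 2) ℝ} {j : ℕ} (α : Fin 2 → ℕ)
    (h : Q ^ (j + α 0 + α 1) ∣ f) : Q ^ j ∣ pderivPow α f := by
  rw [pderivPow_apply]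
  exact dvd_pderiv_iter 0 (α 0) j _ (dvd_pderiv_iter 1 (α 1) (j + α 0) f h)

noncomputable def mons : Fin 6 → (Fin 2 →₀ ℕ)
  | 0 => 0
  | 1 => Finsupp.single 0 1
  | 2 => Finsupp.single 1 1
  | 3 => Finsupp.single 0 2
  | 4 => Finsupp.single 0 1 + Finsupp.single 1 1
  | 5 => Finsupp.single 1 2

def pairs : Fin 6 → ℕ × ℕ
  | 0 => (0,0)
  | 1 => (1,0)
  | 2 => (0,1)
  | 3 => (2,0)
  | 4 => (1,1)
  | 5 => (0,2)

lemma mons_apply_pair : (fun i => ((mons i) 0, (mons i) 1)) = pairs := by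
  funext i
  fin_cases i <;> simp [mons, pairs, Finsupp.single_apply]

lemma mons_inj : Function.Injective mons := by
  have h : Function.Injective (fun i => ((mons i) 0, (mons i) 1)) := by
    rw [mons_apply_pair]
    decide
  exact fun i j hij => h (by simp [hij])

lemma mons_sum_le (i : Fin 6) : ((mons i).sum fun _ e => e) ≤ 2 := by
  fin_cases i <;> simp [mons, Finsupp.sum_add_index, Finsupp.sum_single_index, Matrix.cons_val_zero, Matrix.cons_val_succ]

noncomputable def Qlin : (Fin 6 → ℝ) →ₗ[ℝ] MvPolynomial (Fin 2) ℝ :=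
  ∑ i, (monomial (mons i)).comp (LinearMap.proj i)

lemma Qlin_apply (a : Fin 6 → ℝ) : Qlin a = ∑ i, monomial (mons i) (a i) := by
  simp [Qlin]

lemma coeff_Qlin (a : Fin 6 → ℝ) (i : Fin 6) : coeff (mons i) (Qlin a) = a i := by
  rw [Qlin_apply]
  rw [MvPolynomial.coeff_sum]
  rw [Finset.sum_eq_single i]
  · simp
  · intro j _ hj
    rw [coeff_monomial, if_neg (fun h => hj (mons_inj h))]
  · simp

lemma Qlin_ne_zero {a : Fin 6 → ℝ} (ha : a ≠ 0) : Qlin a ≠ 0 := by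
  intro h
  apply ha
  funext i
  have := coeff_Qlin a i
  rw [h] at this
  simpa using this.symm

lemma Qlin_totalDegree (a : Fin 6 → ℝ) : (Qlin a).totalDegree ≤ 2 := by
  rw [Qlin_apply]
  refine le_trans (totalDegree_finset_sum _ _) (Finset.sup_le fun i _ => ?_)
  exact le_trans (totalDegree_monomial_le _ _) (mons_sum_le i)

end HermiteAux

open HermiteAux in
/-- If a Hermite interpolation problem on 5 nodes in `ℝ²` is regular on `Π_n^2`, then
`n ≤ 2·max(p_1,…,p_5) + 1`. -/
theorem regular_five_nodes_degree_bound {n : ℕ} (X : Fin 5 → (Fin 2 → ℝ))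
    (hX : Function.Injective X) (p : Fin 5 → ℕ)
    (hreg : ∀ c : Fin 5 → (Fin 2 → ℕ) → ℝ, ∃! f : MvPolynomial (Fin 2) ℝ,
        f.totalDegree ≤ n ∧ ∀ q, ∀ α : Fin 2 → ℕ, (∑ i, α i) ≤ p q →
          MvPolynomial.eval (X q) (pderivPow α f) = c q α) :
    n ≤ 2 * Finset.univ.sup p + 1 := by
  by_contra hn
  push_neg at hn
  set P := Finset.univ.sup p with hP
  -- linear map: coefficients of conics → values at the 5 points
  let L : (Fin 6 → ℝ) →ₗ[ℝ] (Fin 5 → ℝ) :=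
    LinearMap.pi fun q => (aeval (X q)).toLinearMap.comp Qlin
  have hL : ¬ Function.Injective L := by
    intro hinj
    have := LinearMap.finrank_le_finrank_of_injective hinj
    simp [Module.finrank_pi] at this
  rw [Function.not_injective_iff] at hL
  obtain ⟨a, b, hab, hne⟩ := hL
  set v : Fin 6 → ℝ := a - b with hv
  have hv0 : v ≠ 0 := sub_ne_zero.mpr hne
  have hLv : L v = 0 := by rw [hv, map_sub, hab, sub_self]
  set Q : MvPolynomial (Fin 2) ℝ := Qlin v with hQdef
  have hQ0 : Q ≠ 0 := Qlin_ne_zero hv0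
  have hQdeg : Q.totalDegree ≤ 2 := Qlin_totalDegree v
  have hQeval : ∀ q, eval (X q) Q = 0 := by
    intro q
    have := congrFun hLv q
    simpa [L, Q] using this
  -- the counterexample polynomial
  set f : MvPolynomial (Fin 2) ℝ := Q ^ (P + 1) with hfdef
  have hf0 : f ≠ 0 := pow_ne_zero _ hQ0
  have hfdeg : f.totalDegree ≤ n := by
    calc f.totalDegree ≤ (P + 1) * Q.totalDegree := totalDegree_pow Q (P + 1)
    _ ≤ (P + 1) * 2 := Nat.mul_le_mul_left _ hQdeg
    _ ≤ n := by omega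
  have hfder : ∀ q, ∀ α : Fin 2 → ℕ, (∑ i, α i) ≤ p q →
      eval (X q) (pderivPow α f) = 0 := by
    intro q α hα
    have hpq : p q ≤ P := Finset.le_sup (Finset.mem_univ q)
    have hsum : α 0 + α 1 ≤ P := by
      have : (∑ i, α i) = α 0 + α 1 := Fin.sum_univ_two α
      omega
    have hdvd : Q ^ 1 ∣ pderivPow α f := by
      refine dvd_pderivPow α ?_
      exact pow_dvd_pow Q (by omega)
    obtain ⟨g, hg⟩ := hdvd
    rw [hg]
    simp [hQeval q]
  obtain ⟨w, _, huniq⟩ := hreg 0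
  have h1 : w = 0 := (huniq 0 ⟨by simp, fun q α _ => by simp⟩).symm
  have h2 : f = w := huniq f ⟨hfdeg, fun q α h => by simpa using hfder q α h⟩
  exact hf0 (h2.trans h1)
end
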